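/- arXiv:1803.08301 — 8 statements merged into one kernel-verified Lean document; each statement's English description precedes it below -/
import Mathlib

section
/- Let n ≥ 2, s ≥ 3, and let {H_iα_i}_{i=1}^{s} be a coset partition of the free group F_n, where H_i < F_n has finite index d_i, α_i ∈ F_n, and 1 < d_1 ≤ … ≤ d_s. For w ∈ F_n let o_{*i}(w) be the least positive integer m with w^m ∈ α_i⁻¹H_iα_i, and let o_max(w) = max{o_{*i}(w) : 1 ≤ i ≤ s}. If there exists w ∈ F_n with o_max(w) > d_{s-2}, then the partition has multiplicity, i.e., d_i = d_j for some i ≠ j. -/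
/-!
Fix `w`. Along each line `m ↦ g * w ^ m` the coset partition induces a colouring of `ℕ` whose
colour classes are residue classes, the class of the `i`-th coset having modulus `o_{*i}(w)`.
By the Mirsky–Newman theorem the largest modulus `M = o_max(w)` of such a colouring occurs twice.
Since `o_{*i}(w) ≤ d_i` and `M > d_{s-2}`, only the last two indices can reach `M`, so exactly two
indices `j₀ ≠ j₁` do, and every window of `M` consecutive points of a line meets the two cosets
equally often (once each, or not at all). In a finite quotient `G ⧸ N` through which all cosets
factor, averaging over all lines gives `|H_{j₀} ⧸ N| = |H_{j₁} ⧸ N|`, hence `d_{j₀} = d_{j₁}`.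
-/

open Finset

def IsResidueClassColoring {ι : Type*} (c : ℕ → ι) (o : ι → ℕ) : Prop :=
  ∀ m k, c k = c m ↔ k ≡ m [MOD o (c m)]

theorem range_mul_filter_modEq_eq_image {o : ℕ} (ho : 0 < o) (K a : ℕ) :
    {m ∈ range (o * K) | m ≡ a [MOD o]} = (range K).image (fun t => a % o + o * t) := by
  ext m
  simp only [mem_filter, mem_range, mem_image]
  unfold Nat.ModEq
  constructor
  · rintro ⟨hm, hma⟩
    exact ⟨m / o, Nat.div_lt_of_lt_mul hm, hma ▸ Nat.mod_add_div m o⟩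
  · rintro ⟨t, ht, rfl⟩
    refine ⟨?_, by rw [Nat.add_mul_mod_self_left, Nat.mod_mod]⟩
    calc a % o + o * t < o * (t + 1) := by
          rw [mul_add, mul_one, add_comm]; gcongr; exact Nat.mod_lt a ho
      _ ≤ o * K := Nat.mul_le_mul_left o ht

theorem sum_pow_range_mul_filter_modEq {R : Type*} [Semiring R] (x : R) {o : ℕ} (ho : 0 < o)
    (K a : ℕ) :
    ∑ m ∈ range (o * K) with m ≡ a [MOD o], x ^ m = x ^ (a % o) * ∑ t ∈ range K, (x ^ o) ^ t := by
  rw [range_mul_filter_modEq_eq_image ho, sum_image (fun _ _ _ _ h => by simpa [ho.ne'] using h),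
    mul_sum]
  simp only [pow_add, pow_mul]

theorem geom_sum_eq_zero_of_pow_eq_one {R : Type*} [Ring R] [NoZeroDivisors R] {x : R}
    (hx : x ≠ 1) {n : ℕ} (hn : x ^ n = 1) : ∑ t ∈ range n, x ^ t = 0 := by
  have h := mul_neg_geom_sum x n
  rw [hn, sub_self] at h
  exact (mul_eq_zero.1 h).resolve_left (sub_ne_zero.2 hx.symm)

namespace IsResidueClassColoring

variable {ι : Type*} {c : ℕ → ι} {o : ι → ℕ} {i : ι} {a : ℕ}

theorem filter_range_eq [DecidableEq ι] (hc : IsResidueClassColoring c o) (ha : c a = i) (L : ℕ) :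
    {m ∈ range L | c m = i} = {m ∈ range L | m ≡ a [MOD o i]} := by
  subst ha
  exact filter_congr fun m _ => hc a m

theorem card_filter_range_mul [DecidableEq ι] (hc : IsResidueClassColoring c o) (hi : 0 < o i)
    (ha : c a = i) (K : ℕ) : #{m ∈ range (o i * K) | c m = i} = K := by
  rw [hc.filter_range_eq ha, range_mul_filter_modEq_eq_image hi,
    card_image_of_injective _ fun _ _ h => by simpa [hi.ne'] using h, card_range]

theorem sum_pow_filter_range_of_dvd [DecidableEq ι] (hc : IsResidueClassColoring c o) (hi : 0 < o i)
    (ha : c a = i) {R : Type*} [Semiring R] (x : R) {L : ℕ} (hL : o i ∣ L) :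
    ∑ m ∈ range L with c m = i, x ^ m = x ^ (a % o i) * ∑ t ∈ range (L / o i), (x ^ o i) ^ t := by
  rw [hc.filter_range_eq ha, ← Nat.mul_div_cancel' hL, Nat.mul_div_cancel_left _ hi,
    sum_pow_range_mul_filter_modEq x hi]

/-- Mirsky–Newman. For a primitive `o j`-th root of unity `ζ` and `L` a common multiple of all
periods, `∑ m < L, ζ ^ m = 0`; split by colours, every class of period `< o j` contributes `0`,
so a class of the largest period cannot be the only one. -/
theorem exists_ne_period_eq_of_forall_le [Fintype ι] (hc : IsResidueClassColoring c o)
    (ho : ∀ i, 0 < o i) {j : ι} (hj : j ∈ Set.range c) (hmax : ∀ i, o i ≤ o j) (h1 : 1 < o j) :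
    ∃ i ≠ j, o i = o j ∧ i ∈ Set.range c := by
  classical
  by_contra! hcon
  set L := ∏ i, o i
  have hdvd : ∀ i, o i ∣ L := fun i => dvd_prod_of_mem o (mem_univ i)
  set ζ := Complex.exp (2 * Real.pi * Complex.I / o j)
  have hζ : IsPrimitiveRoot ζ (o j) := Complex.isPrimitiveRoot_exp _ (by omega)
  have hζL : ζ ^ L = 1 := (hζ.pow_eq_one_iff_dvd L).2 (hdvd j)
  have hsmall : ∀ i ≠ j, ∑ m ∈ range L with c m = i, ζ ^ m = 0 := by
    intro i hij
    by_cases hi : i ∈ Set.range c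
    · obtain ⟨a, ha⟩ := hi
      have hlt : o i < o j := lt_of_le_of_ne (hmax i) fun h => hcon i hij h ⟨a, ha⟩
      rw [hc.sum_pow_filter_range_of_dvd (ho i) ha ζ (hdvd i),
        geom_sum_eq_zero_of_pow_eq_one (hζ.pow_ne_one_of_pos_of_lt (ho i).ne' hlt)
          (by rw [← pow_mul, Nat.mul_div_cancel' (hdvd i), hζL]), mul_zero]
    · exact sum_eq_zero fun m hm => absurd ⟨m, (mem_filter.1 hm).2⟩ hi
  obtain ⟨a, ha⟩ := hj
  have hsplit : ∑ m ∈ range L, ζ ^ m = ∑ m ∈ range L with c m = j, ζ ^ m := by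
    rw [← sum_fiberwise (range L) c, sum_eq_single j (fun i _ hij => hsmall i hij) (by simp)]
  rw [geom_sum_eq_zero_of_pow_eq_one (hζ.ne_one h1) hζL,
    hc.sum_pow_filter_range_of_dvd (ho j) ha ζ (hdvd j), hζ.pow_eq_one] at hsplit
  simp only [one_pow, sum_const, card_range, nsmul_eq_mul, mul_one] at hsplit
  have hK : 0 < L / o j := Nat.div_pos (Nat.le_of_dvd (prod_pos fun i _ => ho i) (hdvd j)) (ho j)
  exact mul_ne_zero (pow_ne_zero _ (hζ.ne_zero (by omega))) (by exact_mod_cast hK.ne') hsplit.symm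

theorem card_filter_range_eq_of_maximal_pair [Fintype ι] [DecidableEq ι]
    (hc : IsResidueClassColoring c o) (ho : ∀ i, 0 < o i) {M : ℕ} (hM : 1 < M) (hmax : ∀ i, o i ≤ M) {j₀ j₁ : ι}
    (hpair : ∀ i, o i = M ↔ i = j₀ ∨ i = j₁) :
    #{m ∈ range M | c m = j₀} = #{m ∈ range M | c m = j₁} := by
  have hj₀ : o j₀ = M := (hpair j₀).2 (.inl rfl)
  have hj₁ : o j₁ = M := (hpair j₁).2 (.inr rfl)
  have hpartner : ∀ {j j'}, o j = M → (∀ i, o i = M → i = j ∨ i = j') →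
      j ∈ Set.range c → j' ∈ Set.range c := by
    intro j j' hj hjj' hjc
    obtain ⟨i, hij, hi, hic⟩ := hc.exists_ne_period_eq_of_forall_le ho hjc (hj ▸ hmax) (hj ▸ hM)
    rcases hjj' i (hi.trans hj) with rfl | rfl
    exacts [absurd rfl hij, hic]
  have hone : ∀ {j}, o j = M → j ∈ Set.range c → #{m ∈ range M | c m = j} = 1 := by
    rintro j hj ⟨a, ha⟩
    simpa [hj] using hc.card_filter_range_mul (ho j) ha 1
  by_cases h₀ : j₀ ∈ Set.range c
  · have h₁ := hpartner hj₀ (fun i => (hpair i).1) h₀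
    rw [hone hj₀ h₀, hone hj₁ h₁]
  · have h₁ : j₁ ∉ Set.range c := fun h₁ =>
      h₀ (hpartner hj₁ (fun i hi => ((hpair i).1 hi).symm) h₁)
    rw [filter_false_of_mem fun m _ => (h₀ ⟨m, ·⟩), filter_false_of_mem fun m _ => (h₁ ⟨m, ·⟩)]

end IsResidueClassColoring

theorem zpow_mem_iff_dvd_of_isLeast {G : Type*} [Group G] {K : Subgroup G} {u : G} {o : ℕ}
    (ho : IsLeast {m : ℕ | 0 < m ∧ u ^ m ∈ K} o) (t : ℤ) : u ^ t ∈ K ↔ (o : ℤ) ∣ t := by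
  have hnat : ∀ n : ℕ, u ^ n ∈ K ↔ o ∣ n := by
    intro n
    have hmod := Nat.mod_lt n ho.1.1
    rw [← Nat.div_add_mod n o, pow_add, pow_mul, mul_mem_cancel_left (pow_mem ho.1.2 _),
      Nat.dvd_add_right (dvd_mul_right _ _)]
    constructor
    · intro h
      rcases Nat.eq_zero_or_pos (n % o) with h0 | hpos
      · rw [h0]; exact dvd_zero o
      · exact absurd (ho.2 ⟨hpos, h⟩) (by omega)
    · intro h
      rw [Nat.eq_zero_of_dvd_of_lt h hmod, pow_zero]
      exact K.one_mem
  rcases Int.natAbs_eq t with ht | ht <;> rw [ht]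
  · rw [zpow_natCast, hnat, Int.natCast_dvd_natCast]
  · rw [zpow_neg, inv_mem_iff, zpow_natCast, hnat, Int.dvd_neg, Int.natCast_dvd_natCast]

theorem le_index_of_isLeast {G : Type*} [Group G] {K : Subgroup G} (hK : K.index ≠ 0) {u : G}
    {o : ℕ} (ho : IsLeast {m : ℕ | 0 < m ∧ u ^ m ∈ K} o) : o ≤ K.index := by
  obtain ⟨n, hn, hnK, hun⟩ := K.exists_pow_mem_of_index_ne_zero hK u
  exact (ho.2 ⟨hn, hun⟩).trans hnK

section CosetPartition

variable {G ι : Type*} [Group G] {H : ι → Subgroup G} {α : ι → G}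

noncomputable def cosetPartIndex (hpart : ∀ x : G, ∃! i, x * (α i)⁻¹ ∈ H i) (x : G) : ι :=
  (hpart x).exists.choose

theorem cosetPartIndex_eq_iff (hpart : ∀ x : G, ∃! i, x * (α i)⁻¹ ∈ H i) {x : G} {i : ι} :
    cosetPartIndex hpart x = i ↔ x * (α i)⁻¹ ∈ H i :=
  ⟨fun h => h ▸ (hpart x).exists.choose_spec,
    fun h => (hpart x).unique (hpart x).exists.choose_spec h⟩

theorem isResidueClassColoring_cosetPartIndex (hpart : ∀ x : G, ∃! i, x * (α i)⁻¹ ∈ H i)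
    {w : G} {o : ι → ℕ} (ho : ∀ i, IsLeast {m : ℕ | 0 < m ∧ α i * w ^ m * (α i)⁻¹ ∈ H i} (o i))
    (g : G) : IsResidueClassColoring (fun m => cosetPartIndex hpart (g * w ^ m)) o := by
  intro m k
  set i := cosetPartIndex hpart (g * w ^ m)
  have hi : g * w ^ m * (α i)⁻¹ ∈ H i := (cosetPartIndex_eq_iff hpart).1 rfl
  have hk : g * w ^ k * (α i)⁻¹ = g * w ^ m * (α i)⁻¹ * (α i * w ^ ((k : ℤ) - m) * (α i)⁻¹) := by
    rw [zpow_sub, zpow_natCast, zpow_natCast]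
    group
  rw [cosetPartIndex_eq_iff, hk, mul_mem_cancel_left hi, ← conj_zpow,
    zpow_mem_iff_dvd_of_isLeast (by simpa only [conj_pow] using ho i), Nat.ModEq.comm,
    Nat.modEq_iff_dvd]

theorem sum_card_filter_range_mul_pow [Fintype G] (p : G → Prop) [DecidablePred p] (x : G)
    (r : ℕ) : ∑ q, #{m ∈ range r | p (q * x ^ m)} = r * #{q | p q} := by
  calc ∑ q, #{m ∈ range r | p (q * x ^ m)}
      = ∑ m ∈ range r, ∑ q, if p (q * x ^ m) then 1 else 0 := by
        simp only [card_filter]; exact sum_comm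
    _ = ∑ m ∈ range r, #{q | p q} := sum_congr rfl fun m _ => by
        rw [card_filter]
        exact Equiv.sum_comp (Equiv.mulRight (x ^ m)) fun q => if p q then 1 else 0
    _ = r * #{q | p q} := by simp

theorem card_filter_cosetPartIndex_eq [Fintype G] [DecidableEq ι]
    (hpart : ∀ x : G, ∃! i, x * (α i)⁻¹ ∈ H i) (i : ι) :
    #{x | cosetPartIndex hpart x = i} = Nat.card (H i) := by
  rw [← Fintype.card_subtype, ← Nat.card_eq_fintype_card]
  exact Nat.card_congr
    (Equiv.subtypeEquiv (Equiv.mulRight (α i)⁻¹) fun _ => cosetPartIndex_eq_iff hpart)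

theorem index_eq_of_maximal_pair_of_finite [Finite G] [Fintype ι]
    (hpart : ∀ x : G, ∃! i, x * (α i)⁻¹ ∈ H i)
    {w : G} {o : ι → ℕ} (ho : ∀ i, IsLeast {m : ℕ | 0 < m ∧ α i * w ^ m * (α i)⁻¹ ∈ H i} (o i))
    {M : ℕ} (hM : 1 < M) (hmax : ∀ i, o i ≤ M) {j₀ j₁ : ι}
    (hpair : ∀ i, o i = M ↔ i = j₀ ∨ i = j₁) : (H j₀).index = (H j₁).index := by
  classical
  have := Fintype.ofFinite G
  have hcard : Nat.card (H j₀) = Nat.card (H j₁) := by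
    rw [← card_filter_cosetPartIndex_eq hpart, ← card_filter_cosetPartIndex_eq hpart]
    refine Nat.eq_of_mul_eq_mul_left (by omega : 0 < M) ?_
    rw [← sum_card_filter_range_mul_pow _ w, ← sum_card_filter_range_mul_pow _ w]
    exact sum_congr rfl fun g _ => (isResidueClassColoring_cosetPartIndex hpart ho g)
      |>.card_filter_range_eq_of_maximal_pair (fun i => (ho i).1.1) hM hmax hpair
  have h₀ := (H j₀).card_mul_index
  rw [hcard, ← (H j₁).card_mul_index] at h₀
  exact Nat.eq_of_mul_eq_mul_left Nat.card_pos h₀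

theorem index_eq_of_maximal_pair [Fintype ι] (hpart : ∀ x : G, ∃! i, x * (α i)⁻¹ ∈ H i)
    (hH : ∀ i, (H i).FiniteIndex)
    {w : G} {o : ι → ℕ} (ho : ∀ i, IsLeast {m : ℕ | 0 < m ∧ α i * w ^ m * (α i)⁻¹ ∈ H i} (o i))
    {M : ℕ} (hM : 1 < M) (hmax : ∀ i, o i ≤ M) {j₀ j₁ : ι}
    (hpair : ∀ i, o i = M ↔ i = j₀ ∨ i = j₁) : (H j₀).index = (H j₁).index := by
  -- every `H i` contains the normal core `N` of `⨅ i, H i`, so everything descends to `G ⧸ N`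
  have := Subgroup.finiteIndex_iInf hH
  set N := (⨅ i, H i).normalCore
  set π := QuotientGroup.mk' N
  have hπ : Function.Surjective π := QuotientGroup.mk'_surjective N
  have hN : ∀ i, π.ker ≤ H i := fun i => by
    rw [QuotientGroup.ker_mk']
    exact (Subgroup.normalCore_le _).trans (iInf_le _ i)
  have hmem : ∀ i x, π x ∈ (H i).map π ↔ x ∈ H i := fun i x => by
    rw [← Subgroup.mem_comap, Subgroup.comap_map_eq_self (hN i)]
  have hpartN : ∀ q : G ⧸ N, ∃! i, q * (π (α i))⁻¹ ∈ (H i).map π := by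
    intro q
    obtain ⟨x, rfl⟩ := hπ q
    simpa only [← map_inv, ← map_mul, hmem] using hpart x
  have hoN : ∀ i,
      IsLeast {m : ℕ | 0 < m ∧ π (α i) * π w ^ m * (π (α i))⁻¹ ∈ (H i).map π} (o i) := by
    intro i
    simpa only [← map_pow, ← map_inv, ← map_mul, hmem] using ho i
  have := index_eq_of_maximal_pair_of_finite hpartN hoN hM hmax hpair
  rwa [Subgroup.index_map_eq _ hπ (hN j₀), Subgroup.index_map_eq _ hπ (hN j₁)] at this

end CosetPartition

/-- If for some `w ∈ F n` the maximum `o_max(w)` of the orders `o_{*i}(w)` exceeds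
`d_{s-2}` (0-based: `d ⟨s-3,_⟩`), then the coset partition has multiplicity. -/
theorem multiplicity_of_omax_gt_d_sub_two
    (n s : ℕ) (hs : 3 ≤ s)
    (H : Fin s → Subgroup (FreeGroup (Fin n)))
    (α : Fin s → FreeGroup (Fin n))
    (d : Fin s → ℕ)
    (hind : ∀ i, (H i).index = d i)
    (hone : ∀ i, 1 < d i)
    (hmono : Monotone d)
    (hpart : ∀ x : FreeGroup (Fin n), ∃! i : Fin s, x * (α i)⁻¹ ∈ H i)
    (hw : ∃ (w : FreeGroup (Fin n)) (o : Fin s → ℕ) (omax : ℕ),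
        (∀ i, IsLeast {m : ℕ | 0 < m ∧ α i * w ^ m * (α i)⁻¹ ∈ H i} (o i)) ∧
        (∀ i, o i ≤ omax) ∧ (∃ i, o i = omax) ∧
        d ⟨s - 3, by omega⟩ < omax) :
    ∃ i j, i ≠ j ∧ d i = d j := by
  obtain ⟨w, o, M, ho, hmax, ⟨j₀, hj₀⟩, hM⟩ := hw
  have hH : ∀ i, (H i).FiniteIndex := fun i =>
    ⟨by rw [hind i]; exact (zero_lt_one.trans (hone i)).ne'⟩
  have hM1 : 1 < M := (hone _).trans hM
  have hlast : ∀ i, o i = M → s - 3 < i.val := fun i hi => by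
    by_contra! hi'
    have hod := le_index_of_isLeast (hH i).index_ne_zero (u := α i * w * (α i)⁻¹)
      (by simpa only [conj_pow] using ho i)
    rw [hind] at hod
    have := hmono (show i ≤ ⟨s - 3, by omega⟩ from hi')
    omega
  have hj₀c : j₀ ∈ Set.range fun m => cosetPartIndex hpart (α j₀ * w ^ m) :=
    ⟨0, by simp [cosetPartIndex_eq_iff]⟩
  obtain ⟨j₁, hne, hj₁, -⟩ := (isResidueClassColoring_cosetPartIndex hpart ho (α j₀))
    |>.exists_ne_period_eq_of_forall_le (fun i => (ho i).1.1) hj₀c (hj₀ ▸ hmax) (hj₀ ▸ hM1)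
  have hpair : ∀ i, o i = M ↔ i = j₀ ∨ i = j₁ := fun i => by
    refine ⟨fun hi => ?_, by rintro (rfl | rfl); exacts [hj₀, hj₁.trans hj₀]⟩
    have := hlast i hi; have := hlast j₀ hj₀; have := hlast j₁ (hj₁.trans hj₀)
    simp only [Fin.ext_iff] at hne ⊢
    omega
  refine ⟨j₀, j₁, hne.symm, ?_⟩
  rw [← hind, ← hind]
  exact index_eq_of_maximal_pair hpart hH ho hM1 hmax hpair
end

section
/- Let n ≥ 2, s ≥ 4, and let {H_iα_i}_{i=1}^{s} be a coset partition of the free group F_n, where H_i < F_n has finite index d_i, α_i ∈ F_n, and 1 < d_1 ≤ … ≤ d_s. For w ∈ F_n let o_{*i}(w) be the least positive integer m with w^m ∈ α_i⁻¹H_iα_i, and let o_max(w) = max{o_{*i}(w) : 1 ≤ i ≤ s}. If there exists w ∈ F_n with o_max(w) > d_{s-3} and the smallest prime dividing o_max(w) is at least 3, then the partition has multiplicity, i.e., d_i = d_j for some i ≠ j. -/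
/-!
Follow the line `x, xw, xw², …` through the partition and colour `m` by the cell containing
`xwᵐ`. The cell `Hᵢαᵢ` is met along a single residue class modulo `o_{*i}(w)`, or not at all, so the
colour classes form an exact covering system of `ℕ`. Summing `ωᵐ` over a long period, for `ω` a
primitive `N`-th root of unity with `N = o_max(w)`, kills every class of modulus `< N` and leaves a
vanishing sum of `N`-th roots of unity, one for each cell with `o_{*i}(w) = N` met by the line; for
odd `N` such a sum has at least three terms. Since `o_{*i}(w) ≤ dᵢ`, only the last three cells can
have `o_{*i}(w) = N`, so every line meeting one of them meets each of them exactly once every `N`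
steps. Double counting in the finite quotient by the normal core of `⋂ Hᵢ` then shows that two of
these cells have the same index.
-/

open Finset

namespace Subgroup

variable {G : Type*} [Group G] {H : Subgroup G}

theorem zpow_mem_iff_dvd_of_isLeast {v : G} {o : ℕ}
    (ho : IsLeast {m : ℕ | 0 < m ∧ v ^ m ∈ H} o) (k : ℤ) : v ^ k ∈ H ↔ (o : ℤ) ∣ k := by
  obtain ⟨⟨ho_pos, hvo⟩, hmin⟩ := ho
  have hrem_nonneg : 0 ≤ k % o := Int.emod_nonneg _ (by omega)
  have hrem_lt : k % o < o := Int.emod_lt_of_pos _ (by omega)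
  have hsplit : v ^ k = (v ^ o) ^ (k / o) * v ^ (k % o).toNat := by
    rw [← zpow_natCast v o, ← zpow_mul, ← zpow_natCast, Int.toNat_of_nonneg hrem_nonneg,
      ← zpow_add, Int.mul_ediv_add_emod]
  rw [hsplit, H.mul_mem_cancel_left (H.zpow_mem hvo _), Int.dvd_iff_emod_eq_zero]
  refine ⟨fun hrem => ?_, fun hrem => by simp [hrem]⟩
  by_contra hne
  have := hmin ⟨by omega, hrem⟩
  omega

theorem conj_zpow_mem_iff_dvd_of_isLeast {a g : G} {o : ℕ}
    (ho : IsLeast {m : ℕ | 0 < m ∧ a * g ^ m * a⁻¹ ∈ H} o) (k : ℤ) :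
    a * g ^ k * a⁻¹ ∈ H ↔ (o : ℤ) ∣ k := by
  simp_rw [← conj_pow] at ho
  rw [← conj_zpow]
  exact zpow_mem_iff_dvd_of_isLeast ho k

theorem mul_pow_mem_iff_modEq_of_isLeast {a g x : G} {o m₀ : ℕ}
    (ho : IsLeast {m : ℕ | 0 < m ∧ a * g ^ m * a⁻¹ ∈ H} o) (h₀ : x * g ^ m₀ * a⁻¹ ∈ H) (m : ℕ) :
    x * g ^ m * a⁻¹ ∈ H ↔ m ≡ m₀ [MOD o] := by
  have hfactor : x * g ^ m * a⁻¹ = (x * g ^ m₀ * a⁻¹) * (a * g ^ ((m : ℤ) - m₀) * a⁻¹) := by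
    rw [zpow_sub, zpow_natCast, zpow_natCast]
    group
  rw [hfactor, H.mul_mem_cancel_left h₀, conj_zpow_mem_iff_dvd_of_isLeast ho, Nat.ModEq.comm,
    Nat.modEq_iff_dvd]

theorem le_index_of_isLeast {a g : G} {o : ℕ}
    (ho : IsLeast {m : ℕ | 0 < m ∧ a * g ^ m * a⁻¹ ∈ H} o) (hH : H.index ≠ 0) : o ≤ H.index := by
  have hconj : (H.comap (MulAut.conj a).toMonoidHom).index = H.index :=
    index_comap_of_surjective _ (MulAut.conj a).surjective
  obtain ⟨t, ht, hle, hmem⟩ := exists_pow_mem_of_index_ne_zero (hconj ▸ hH) g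
  exact (ho.2 ⟨ht, hmem⟩).trans (hconj ▸ hle)

theorem sum_card_filter_mul_mem {Q : Type*} [Group Q] [Fintype Q] (H : Subgroup Q)
    [DecidablePred (· ∈ H)] (g : ℕ → Q) (M : Finset ℕ) :
    ∑ q : Q, (M.filter fun m => q * g m ∈ H).card = M.card * Nat.card H := by
  simp_rw [card_filter]
  rw [sum_comm, card_eq_sum_ones, sum_mul]
  refine sum_congr rfl fun m _ => ?_
  rw [one_mul, Nat.card_eq_fintype_card, Fintype.card_subtype, card_filter]
  exact Fintype.sum_equiv (Equiv.mulRight (g m)) _ _ fun q => rfl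

theorem mk_mem_map_mk'_iff {K H : Subgroup G} [K.Normal] (hKH : K ≤ H) (g : G) :
    (g : G ⧸ K) ∈ H.map (QuotientGroup.mk' K) ↔ g ∈ H := by
  rw [← QuotientGroup.mk'_apply, ← mem_comap, comap_map_eq_self (by rwa [QuotientGroup.ker_mk'])]

theorem sum_card_filter_out_mul_mem {K H : Subgroup G} [K.Normal] [Fintype (G ⧸ K)]
    [DecidablePred (· ∈ H)] (hKH : K ≤ H) (g : ℕ → G) (M : Finset ℕ) :
    ∑ q : G ⧸ K, (M.filter fun m => q.out * g m ∈ H).card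
      = M.card * Nat.card (H.map (QuotientGroup.mk' K)) := by
  classical
  rw [← sum_card_filter_mul_mem _ (fun m => (g m : G ⧸ K))]
  refine sum_congr rfl fun q _ => congr_arg card (filter_congr fun m _ => ?_)
  rw [← mk_mem_map_mk'_iff hKH, QuotientGroup.mk_mul, QuotientGroup.out_eq']

theorem index_eq_of_forall_card_filter_eq {H₁ H₂ : Subgroup G} [H₁.FiniteIndex] [H₂.FiniteIndex]
    [DecidablePred (· ∈ H₁)] [DecidablePred (· ∈ H₂)] {g₁ g₂ : ℕ → G} {M : Finset ℕ}
    (hM : M.Nonempty)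
    (h : ∀ x : G, (M.filter fun m => x * g₁ m ∈ H₁).card = (M.filter fun m => x * g₂ m ∈ H₂).card) :
    H₁.index = H₂.index := by
  set K := (H₁ ⊓ H₂).normalCore
  have : Fintype (G ⧸ K) := Fintype.ofFinite _
  have hK₁ : K ≤ H₁ := (normalCore_le _).trans inf_le_left
  have hK₂ : K ≤ H₂ := (normalCore_le _).trans inf_le_right
  have hcard : Nat.card (H₁.map (QuotientGroup.mk' K)) = Nat.card (H₂.map (QuotientGroup.mk' K)) :=
    Nat.eq_of_mul_eq_mul_left hM.card_pos <| by
      rw [← sum_card_filter_out_mul_mem hK₁, ← sum_card_filter_out_mul_mem hK₂]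
      exact sum_congr rfl fun q _ => h q.out
  have hindex : ∀ {H : Subgroup G}, K ≤ H → (H.map (QuotientGroup.mk' K)).index = H.index :=
    fun hKH => index_map_eq _ (QuotientGroup.mk'_surjective K) (by rwa [QuotientGroup.ker_mk'])
  rw [← hindex hK₁, ← hindex hK₂]
  refine Nat.eq_of_mul_eq_mul_left (Nat.card_pos (α := H₁.map (QuotientGroup.mk' K))) ?_
  rw [card_mul_index, hcard, card_mul_index]

end Subgroup

def IsResidueColoring {ι : Type*} (f : ℕ → ι) (o : ι → ℕ) : Prop :=
  ∀ m₀ m, f m = f m₀ ↔ m ≡ m₀ [MOD o (f m₀)]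

theorem Finset.sum_range_mul_of_add_eq_mul {R : Type*} [CommSemiring R] {g : ℕ → R} {p : ℕ}
    {c : R} (hg : ∀ m, g (m + p) = c * g m) (k : ℕ) :
    ∑ m ∈ range (p * k), g m = (∑ j ∈ range k, c ^ j) * ∑ m ∈ range p, g m := by
  have hshift : ∀ j m, g (p * j + m) = c ^ j * g m := by
    intro j m
    induction j with
    | zero => simp
    | succ j ih => rw [mul_add_one, add_right_comm, hg, ih, pow_succ, mul_comm _ c, mul_assoc]
  induction k with
  | zero => simp
  | succ k ih =>
    simp only [mul_add_one, sum_range_add, ih, hshift, ← mul_sum, sum_range_succ, add_mul]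

theorem geom_sum_eq_zero_of_pow_eq_one_s3 {K : Type*} [Field K] {z : K} {n : ℕ} (hz : z ≠ 1)
    (hzn : z ^ n = 1) :
    ∑ j ∈ range n, z ^ j = 0 := by
  rw [geom_sum_eq hz, hzn, sub_self, zero_div]

theorem three_le_card_of_sum_eq_zero_of_pow_eq_one {K κ : Type*} [Field K] [CharZero K] {N : ℕ}
    (hN : Odd N) {S : Finset κ} {z : κ → K} (hz : ∀ i ∈ S, z i ^ N = 1) (hS : S.Nonempty)
    (hsum : ∑ i ∈ S, z i = 0) : 3 ≤ S.card := by
  classical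
  by_contra! hcard
  have hpos := hS.card_pos
  interval_cases h : S.card
  · obtain ⟨a, rfl⟩ := card_eq_one.mp h
    have := hz a (mem_singleton_self a)
    rw [sum_singleton] at hsum
    rw [hsum, zero_pow (by rintro rfl; simp at hN)] at this
    exact zero_ne_one this
  · obtain ⟨a, b, hab, rfl⟩ := card_eq_two.mp h
    rw [sum_pair hab, add_eq_zero_iff_eq_neg] at hsum
    have ha := hz a (by simp)
    rw [hsum, hN.neg_pow, hz b (by simp)] at ha
    norm_num at ha

namespace IsResidueColoring

variable {ι : Type*} {f : ℕ → ι} {o : ι → ℕ}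

theorem add_modulus_eq_iff (hf : IsResidueColoring f o) (i : ι) (m : ℕ) :
    f (m + o i) = i ↔ f m = i := by
  constructor
  · intro h
    rw [← h, hf, h]
    exact (Nat.add_mod_right m (o i)).symm
  · rintro rfl
    exact (hf m _).2 (Nat.add_mod_right m _)

theorem card_filter_range_eq_one [DecidableEq ι] (hf : IsResidueColoring f o) {N m₀ : ℕ}
    (hm₀ : o (f m₀) = N) (hN : 0 < N) :
    ((range N).filter fun m => f m = f m₀).card = 1 := by
  refine card_eq_one.mpr ⟨m₀ % N, ?_⟩
  ext m
  simp only [mem_filter, mem_range, mem_singleton, hf m₀ m, hm₀, Nat.ModEq]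
  constructor
  · rintro ⟨hm, h⟩
    rwa [Nat.mod_eq_of_lt hm] at h
  · rintro rfl
    exact ⟨Nat.mod_lt _ hN, Nat.mod_mod _ _⟩

theorem sum_pow_filter_eq_zero [Fintype ι] [DecidableEq ι] (hf : IsResidueColoring f o)
    (ho : ∀ i, 0 < o i) {N : ℕ} (hoN : ∀ i, o i ≤ N) (hN : 1 < N) {K : Type*} [Field K]
    [CharZero K] {ω : K} (hω : IsPrimitiveRoot ω N) :
    ∑ m ∈ (range N).filter (fun m => o (f m) = N), ω ^ m = 0 := by
  set S := (range N).filter (fun m => o (f m) = N)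
  -- A colour of modulus `o i < N` contributes a complete geometric sum in `ω ^ o i`, hence zero.
  have hcolor : ∀ i, ∑ m ∈ (range N.factorial).filter (fun m => f m = i), ω ^ m
      = (N.factorial / N : ℕ) * ∑ m ∈ S.filter (fun m => f m = i), ω ^ m := by
    intro i
    obtain ⟨k, hk⟩ := Nat.dvd_factorial (ho i) (hoN i)
    have hg : ∀ m, (if f (m + o i) = i then ω ^ (m + o i) else 0)
        = ω ^ o i * (if f m = i then ω ^ m else 0) := by
      intro m
      by_cases h : f m = i <;> simp [h, hf.add_modulus_eq_iff, pow_add, mul_comm]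
    rw [sum_filter, hk, sum_range_mul_of_add_eq_mul hg]
    rcases (hoN i).lt_or_eq with hlt | heq
    · have hempty : S.filter (fun m => f m = i) = ∅ := filter_eq_empty_iff.2 fun m hm h => by
        rw [mem_filter, h] at hm
        omega
      have hpow : (ω ^ o i) ^ k = 1 := by
        rw [← pow_mul, ← hk, hω.pow_eq_one_iff_dvd]
        exact Nat.dvd_factorial (by omega) le_rfl
      rw [hempty, sum_empty, mul_zero,
        geom_sum_eq_zero_of_pow_eq_one_s3 (hω.pow_ne_one_of_pos_of_lt (ho i).ne' hlt) hpow, zero_mul]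
    · have hS : S.filter (fun m => f m = i) = (range N).filter (fun m => f m = i) := by
        rw [filter_filter]
        exact filter_congr fun m _ => ⟨And.right, fun h => ⟨h ▸ heq, h⟩⟩
      rw [hS, sum_filter, heq, hω.pow_eq_one, Nat.mul_div_cancel_left _ (by omega)]
      simp
  have htotal : ∑ m ∈ range N.factorial, ω ^ m = 0 :=
    geom_sum_eq_zero_of_pow_eq_one_s3 (hω.ne_one hN)
      ((hω.pow_eq_one_iff_dvd N.factorial).2 (Nat.dvd_factorial (by omega) le_rfl))
  have hLN : ((N.factorial / N : ℕ) : K) ≠ 0 :=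
    Nat.cast_ne_zero.2 (Nat.div_pos (Nat.self_le_factorial N) (by omega)).ne'
  rw [← sum_fiberwise (range N.factorial) f, sum_congr rfl fun i _ => hcolor i, ← mul_sum,
    sum_fiberwise] at htotal
  exact (mul_eq_zero.1 htotal).resolve_left hLN

theorem three_le_card_image [Fintype ι] [DecidableEq ι] (hf : IsResidueColoring f o)
    (ho : ∀ i, 0 < o i) {N : ℕ} (hoN : ∀ i, o i ≤ N) (hN : 1 < N) (hodd : Odd N) {m₀ : ℕ}
    (hm₀ : o (f m₀) = N) : 3 ≤ (((range N).filter fun m => o (f m) = N).image f).card := by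
  set S := (range N).filter fun m => o (f m) = N
  have hinj : Set.InjOn f S := by
    intro m hm m' hm' h
    simp only [S, coe_filter, mem_range, Set.mem_ofPred_eq] at hm hm'
    have hmod := (hf m' m).1 h
    rwa [hm'.2, Nat.ModEq, Nat.mod_eq_of_lt hm.1, Nat.mod_eq_of_lt hm'.1] at hmod
  have hmem : m₀ % N ∈ S := by
    have hcol : f (m₀ % N) = f m₀ := (hf m₀ _).2 (by rw [hm₀]; exact Nat.mod_modEq m₀ N)
    simp [S, Nat.mod_lt _ (by omega : 0 < N), hcol, hm₀]
  obtain ⟨ω, hω⟩ : ∃ ω : ℂ, IsPrimitiveRoot ω N := ⟨_, Complex.isPrimitiveRoot_exp N (by omega)⟩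
  rw [card_image_of_injOn hinj]
  refine three_le_card_of_sum_eq_zero_of_pow_eq_one hodd (fun m _ => ?_) ⟨_, hmem⟩
    (hf.sum_pow_filter_eq_zero ho hoN hN hω)
  rw [← pow_mul, mul_comm, pow_mul, hω.pow_eq_one, one_pow]

end IsResidueColoring

def IsCosetPartition {G ι : Type*} [Group G] (H : ι → Subgroup G) (α : ι → G) : Prop :=
  ∀ x : G, ∃! i, x * (α i)⁻¹ ∈ H i

namespace IsCosetPartition

variable {G ι : Type*} [Group G] {H : ι → Subgroup G} {α : ι → G}

noncomputable def cell (hP : IsCosetPartition H α) (x : G) : ι := (hP x).exists.choose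

theorem cell_eq_iff (hP : IsCosetPartition H α) {x : G} {i : ι} :
    hP.cell x = i ↔ x * (α i)⁻¹ ∈ H i :=
  ⟨fun h => h ▸ (hP x).exists.choose_spec, fun h => (hP x).unique (hP x).exists.choose_spec h⟩

theorem isResidueColoring_cell_mul_pow (hP : IsCosetPartition H α) {w : G} {o : ι → ℕ}
    (ho : ∀ i, IsLeast {m : ℕ | 0 < m ∧ α i * w ^ m * (α i)⁻¹ ∈ H i} (o i)) (x : G) :
    IsResidueColoring (fun m => hP.cell (x * w ^ m)) o := fun m₀ m => by
  rw [cell_eq_iff]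
  exact Subgroup.mul_pow_mem_iff_modEq_of_isLeast (ho _) (hP.cell_eq_iff.1 rfl) m

variable [Fintype ι] [DecidableEq ι] {w : G} {o : ι → ℕ} {N : ℕ} {T : Finset ι}

theorem modulus_eq_and_exists_cell_mul_pow_eq (hP : IsCosetPartition H α)
    (ho : ∀ i, IsLeast {m : ℕ | 0 < m ∧ α i * w ^ m * (α i)⁻¹ ∈ H i} (o i))
    (hoN : ∀ i, o i ≤ N) (hN : 1 < N) (hodd : Odd N) (hT : T.card ≤ 3)
    (hTN : ∀ i, o i = N → i ∈ T) {x : G} {m₀ : ℕ} (hm₀ : o (hP.cell (x * w ^ m₀)) = N)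
    {j : ι} (hj : j ∈ T) : o j = N ∧ ∃ m, hP.cell (x * w ^ m) = j := by
  have hf := hP.isResidueColoring_cell_mul_pow ho x
  have hsub : ((range N).filter fun m => o (hP.cell (x * w ^ m)) = N).image
      (fun m => hP.cell (x * w ^ m)) ⊆ T := by
    intro i hi
    obtain ⟨m, hm, rfl⟩ := mem_image.1 hi
    exact hTN _ (mem_filter.1 hm).2
  have hthree := hf.three_le_card_image (fun i => (ho i).1.1) hoN hN hodd hm₀
  rw [← eq_of_subset_of_card_le hsub (hT.trans hthree)] at hj
  obtain ⟨m, hm, rfl⟩ := mem_image.1 hj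
  exact ⟨(mem_filter.1 hm).2, m, rfl⟩

theorem index_eq_of_mem_maxModulus [∀ i, (H i).FiniteIndex] (hP : IsCosetPartition H α)
    (ho : ∀ i, IsLeast {m : ℕ | 0 < m ∧ α i * w ^ m * (α i)⁻¹ ∈ H i} (o i))
    (hoN : ∀ i, o i ≤ N) (hN : 1 < N) (hodd : Odd N) (hT : T.card ≤ 3)
    (hTN : ∀ i, o i = N → i ∈ T) {i₀ : ι} (hi₀ : o i₀ = N) {j₁ j₂ : ι} (hj₁ : j₁ ∈ T)
    (hj₂ : j₂ ∈ T) : (H j₁).index = (H j₂).index := by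
  classical
  have hline := fun {x m₀} hm₀ {j} hj =>
    hP.modulus_eq_and_exists_cell_mul_pow_eq ho hoN hN hodd hT hTN (x := x) (m₀ := m₀) hm₀ (j := j) hj
  have hcell₀ : hP.cell (α i₀) = i₀ := hP.cell_eq_iff.2 (by simp)
  have hstart : o (hP.cell (α i₀ * w ^ 0)) = N := by rwa [pow_zero, mul_one, hcell₀]
  have hcount : ∀ j ∈ T, ∀ x : G, ((range N).filter fun m => x * (w ^ m * (α j)⁻¹) ∈ H j).card
      = if ∃ m₀, o (hP.cell (x * w ^ m₀)) = N then 1 else 0 := by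
    intro j hj x
    have hjN : o j = N := (hline hstart hj).1
    split_ifs with hmax
    · obtain ⟨m₀, hm₀⟩ := hmax
      obtain ⟨-, m, hm⟩ := hline hm₀ hj
      rw [← (hP.isResidueColoring_cell_mul_pow ho x).card_filter_range_eq_one (m₀ := m)
        (by rw [hm, hjN]) (by omega)]
      refine congr_arg card (filter_congr fun k _ => ?_)
      rw [hm, hP.cell_eq_iff, mul_assoc]
    · refine card_eq_zero.2 (filter_eq_empty_iff.2 fun m _ hm => hmax ⟨m, ?_⟩)
      rwa [hP.cell_eq_iff.2 (by rwa [mul_assoc])]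
  exact Subgroup.index_eq_of_forall_card_filter_eq (nonempty_range_iff.2 (by omega))
    fun x => (hcount j₁ hj₁ x).trans (hcount j₂ hj₂ x).symm

end IsCosetPartition

/-- If for some `w ∈ F n` we have `o_max(w) > d_{s-3}` (0-based: `d ⟨s-4,_⟩`)
and the smallest prime dividing `o_max(w)` is at least 3, then the partition has multiplicity. -/
theorem multiplicity_of_omax_gt_d_sub_three_minFac_ge_three
    (n s : ℕ) (hs : 4 ≤ s)
    (H : Fin s → Subgroup (FreeGroup (Fin n)))
    (α : Fin s → FreeGroup (Fin n))
    (d : Fin s → ℕ)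
    (hind : ∀ i, (H i).index = d i)
    (hone : ∀ i, 1 < d i)
    (hmono : Monotone d)
    (hpart : ∀ x : FreeGroup (Fin n), ∃! i : Fin s, x * (α i)⁻¹ ∈ H i)
    (hw : ∃ (w : FreeGroup (Fin n)) (o : Fin s → ℕ) (omax : ℕ),
        (∀ i, IsLeast {m : ℕ | 0 < m ∧ α i * w ^ m * (α i)⁻¹ ∈ H i} (o i)) ∧
        (∀ i, o i ≤ omax) ∧ (∃ i, o i = omax) ∧
        d ⟨s - 4, by omega⟩ < omax ∧ 3 ≤ omax.minFac) :
    ∃ i j, i ≠ j ∧ d i = d j := by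
  obtain ⟨w, o, N, ho, hoN, ⟨i₀, hi₀⟩, hdN, hminFac⟩ := hw
  have hindex : ∀ i, (H i).index ≠ 0 := fun i => by have := hone i; rw [hind]; omega
  have : ∀ i, (H i).FiniteIndex := fun i => ⟨hindex i⟩
  have hodd : Odd N := by
    rw [Nat.odd_iff]
    by_contra h
    have := Nat.minFac_le_of_dvd le_rfl (Nat.dvd_of_mod_eq_zero (by omega : N % 2 = 0))
    omega
  have hN : 1 < N := by have := hone ⟨s - 4, by omega⟩; omega
  -- As `o i ≤ d i` and `d` is monotone, only the last three cells can have maximal modulus.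
  have hTN : ∀ i, o i = N → i ∈ Ioi (⟨s - 4, by omega⟩ : Fin s) := by
    intro i hi
    by_contra hle
    have := (Subgroup.le_index_of_isLeast (ho i) (hindex i)).trans_eq (hind i)
    have := hmono (not_lt.1 (mem_Ioi.not.1 hle))
    omega
  have hT : (Ioi (⟨s - 4, by omega⟩ : Fin s)).card ≤ 3 := by rw [Fin.card_Ioi, Fin.val_mk]; omega
  refine ⟨⟨s - 3, by omega⟩, ⟨s - 2, by omega⟩, by simp [Fin.ext_iff]; omega, ?_⟩
  rw [← hind, ← hind]
  exact IsCosetPartition.index_eq_of_mem_maxModulus hpart ho hoN hN hodd hT hTN hi₀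
    (mem_Ioi.2 (Fin.mk_lt_mk.2 (by omega))) (mem_Ioi.2 (Fin.mk_lt_mk.2 (by omega)))
end

section
/- Let n ≥ 2, s ≥ 4, and let {H_iα_i}_{i=1}^{s} be a coset partition of the free group F_n, where H_i < F_n has finite index d_i, α_i ∈ F_n, and 1 < d_1 ≤ … ≤ d_s. For w ∈ F_n let o_{*i}(w) be the least positive integer m with w^m ∈ α_i⁻¹H_iα_i, let o_max(w) = max{o_{*i}(w) : 1 ≤ i ≤ s}, and let # = |{i : o_{*i}(w) = o_max(w)}|. If there exists w ∈ F_n with o_max(w) > d_{s-3}, the smallest prime dividing o_max(w) equals 2, and either # = 2 or # ≥ 4, then the partition has multiplicity, i.e., d_i = d_j for some i ≠ j. -/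
open Finset

section Aux
variable {G : Type*} [Group G]

private lemma nat_eq_of_dvd_sub {o a b : ℕ} (ha : a < o) (hb : b < o)
    (h : (o : ℤ) ∣ (a : ℤ) - b) : a = b := by
  have h0 : (a : ℤ) - b = 0 := Int.eq_zero_of_abs_lt_dvd h (abs_lt.mpr ⟨by omega, by omega⟩)
  omega

private lemma zpow_mem_iff_dvd (H : Subgroup G) (v : G) (o : ℕ)
    (hl : IsLeast {m : ℕ | 0 < m ∧ v ^ m ∈ H} o) :
    ∀ m : ℤ, v ^ m ∈ H ↔ (o : ℤ) ∣ m := by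
  obtain ⟨⟨hopos, hoin⟩, hmin⟩ := hl
  have hvo : v ^ (o : ℤ) ∈ H := by rw [zpow_natCast]; exact hoin
  intro m
  constructor
  · intro hm
    have hrange : 0 ≤ m % (o : ℤ) ∧ m % (o : ℤ) < o :=
      ⟨Int.emod_nonneg m (by exact_mod_cast hopos.ne'),
       Int.emod_lt_of_pos m (by exact_mod_cast hopos)⟩
    have hrm : v ^ (m % (o : ℤ)) ∈ H := by
      have h1 : v ^ ((o : ℤ) * (m / o)) ∈ H := by
        rw [zpow_mul]; exact Subgroup.zpow_mem H hvo _
      have heq : v ^ (m % (o : ℤ)) = (v ^ ((o : ℤ) * (m / o)))⁻¹ * v ^ m := by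
        rw [← zpow_neg, ← zpow_add]; congr 1
        have := Int.mul_ediv_add_emod m o
        omega
      rw [heq]; exact H.mul_mem (H.inv_mem h1) hm
    by_contra hnd
    have hne : m % (o : ℤ) ≠ 0 := fun h => hnd (Int.dvd_of_emod_eq_zero h)
    have h0 : 0 < (m % (o : ℤ)).toNat := by omega
    have hlt : (m % (o : ℤ)).toNat < o := by omega
    have hmem : v ^ ((m % (o : ℤ)).toNat) ∈ H := by
      rw [← zpow_natCast, Int.toNat_of_nonneg hrange.1]; exact hrm
    exact absurd (hmin ⟨h0, hmem⟩) (by omega)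
  · rintro ⟨c, rfl⟩
    rw [zpow_mul]; exact Subgroup.zpow_mem H hvo _

private lemma conj_least {H : Subgroup G} {α w : G} {o : ℕ}
    (hl : IsLeast {m : ℕ | 0 < m ∧ α * w ^ m * α⁻¹ ∈ H} o) :
    IsLeast {m : ℕ | 0 < m ∧ (α * w * α⁻¹) ^ m ∈ H} o := by
  have hset : {m : ℕ | 0 < m ∧ (α * w * α⁻¹) ^ m ∈ H} =
      {m : ℕ | 0 < m ∧ α * w ^ m * α⁻¹ ∈ H} := by
    ext m; simp [conj_pow]
  rw [hset]; exact hl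

private lemma o_le_index {H : Subgroup G} {α w : G} {o d : ℕ}
    (hl : IsLeast {m : ℕ | 0 < m ∧ α * w ^ m * α⁻¹ ∈ H} o)
    (hd : H.index = d) (hd0 : d ≠ 0) : o ≤ d := by
  have hdvd := zpow_mem_iff_dvd H (α * w * α⁻¹) o (conj_least hl)
  have hcard : Nat.card (G ⧸ H) = d := by rw [← hd]; rfl
  have hfin : Finite (G ⧸ H) := Nat.finite_of_card_ne_zero (by omega)
  have hinj : Function.Injective
      (fun t : Fin o => (QuotientGroup.mk ((α * w * α⁻¹) ^ (t : ℕ)) : G ⧸ H)) := by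
    intro a b hab
    simp only [QuotientGroup.eq] at hab
    have hmem : (α * w * α⁻¹) ^ ((b : ℤ) - (a : ℤ)) ∈ H := by
      have heq : (α * w * α⁻¹) ^ ((b : ℤ) - (a : ℤ)) =
          ((α * w * α⁻¹) ^ (a : ℕ))⁻¹ * (α * w * α⁻¹) ^ (b : ℕ) := by
        rw [← zpow_natCast _ (a : ℕ), ← zpow_natCast _ (b : ℕ), ← zpow_neg, ← zpow_add]
        congr 1; ring
      rw [heq]; exact hab
    have := (hdvd _).mp hmem
    exact Fin.ext (nat_eq_of_dvd_sub b.isLt a.isLt this).symm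
  have hle := Nat.card_le_card_of_injective _ hinj
  rwa [Nat.card_eq_fintype_card, Fintype.card_fin, hcard] at hle

private lemma sum_range_mul_eq {M : Type*} [AddCommMonoid M] (f : ℕ → M) (a b : ℕ) (ha : 0 < a) :
    ∑ m ∈ range (a * b), f m = ∑ p ∈ range a ×ˢ range b, f (p.1 + a * p.2) := by
  refine sum_nbij' (fun m => (m % a, m / a)) (fun p => p.1 + a * p.2) ?_ ?_ ?_ ?_ ?_
  · intro m hm
    simp only [mem_range, mem_product] at *
    exact ⟨Nat.mod_lt _ ha, by rw [Nat.div_lt_iff_lt_mul ha, mul_comm]; exact hm⟩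
  · intro p hp
    simp only [mem_range, mem_product] at *
    calc p.1 + a * p.2 < a + a * p.2 := by omega
      _ = a * (p.2 + 1) := by ring
      _ ≤ a * b := Nat.mul_le_mul_left a (by omega)
  · intro m _; exact Nat.mod_add_div m a
  · intro p hp
    simp only [mem_range, mem_product] at hp
    have h1 : (p.1 + a * p.2) % a = p.1 := by
      rw [Nat.add_mul_mod_self_left, Nat.mod_eq_of_lt hp.1]
    have h2 : (p.1 + a * p.2) / a = p.2 := by
      rw [Nat.add_mul_div_left _ _ ha, Nat.div_eq_of_lt hp.1]; omega
    simp [h1, h2]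
  · intro m _; rw [Nat.mod_add_div m a]

/-- Mirsky–Newman style key step: if exactly the two indices `i ≠ j` achieve the
maximal value `N` of `o`, then translating `H i • α i` by `w ^ (N/2)` lands in `H j • α j`. -/
private lemma key_step {s : ℕ} (H : Fin s → Subgroup G) (α : Fin s → G) (w : G)
    (o : Fin s → ℕ) (N : ℕ) (hN : 1 < N)
    (hleast : ∀ k, IsLeast {m : ℕ | 0 < m ∧ α k * w ^ m * (α k)⁻¹ ∈ H k} (o k))
    (hle : ∀ k, o k ≤ N)
    (hpart : ∀ x : G, ∃! k, x * (α k)⁻¹ ∈ H k)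
    (i j : Fin s) (hij : i ≠ j) (hset : {k : Fin s | o k = N} = {i, j})
    (y : G) (hy : y * (α i)⁻¹ ∈ H i) :
    y * w ^ (N / 2) * (α j)⁻¹ ∈ H j := by
  classical
  have hopos : ∀ k, 0 < o k := fun k => (hleast k).1.1
  have hdvd : ∀ k (m : ℤ), (α k * w * (α k)⁻¹) ^ m ∈ H k ↔ (o k : ℤ) ∣ m :=
    fun k => zpow_mem_iff_dvd (H k) _ (o k) (conj_least (hleast k))
  have hoiN : o i = N := by
    have : i ∈ {k : Fin s | o k = N} := by rw [hset]; left; rfl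
    exact this
  have hojN : o j = N := by
    have : j ∈ {k : Fin s | o k = N} := by rw [hset]; right; rfl
    exact this
  set P : Fin s → ℕ → Prop := fun k m => y * w ^ m * (α k)⁻¹ ∈ H k with hP
  have hdiff : ∀ k (a b : ℕ), P k a → P k b → (o k : ℤ) ∣ (a : ℤ) - b := by
    intro k a b ha hb
    rw [← hdvd k]
    have hgr : (α k * w * (α k)⁻¹) ^ ((a : ℤ) - b) =
        (y * w ^ (b : ℤ) * (α k)⁻¹)⁻¹ * (y * w ^ (a : ℤ) * (α k)⁻¹) := by
      rw [conj_zpow]; group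
    rw [hgr, zpow_natCast, zpow_natCast]
    exact (H k).mul_mem ((H k).inv_mem hb) ha
  have hper : ∀ k (a t : ℕ), P k (a + o k * t) ↔ P k a := by
    intro k a t
    have hmem : (α k * w * (α k)⁻¹) ^ (o k * t) ∈ H k := by
      have := (hdvd k ((o k * t : ℕ) : ℤ)).mpr ⟨t, by push_cast; ring⟩
      rwa [zpow_natCast] at this
    have heq : y * w ^ (a + o k * t) * (α k)⁻¹ =
        (y * w ^ a * (α k)⁻¹) * ((α k * w * (α k)⁻¹) ^ (o k * t)) := by
      rw [conj_pow, pow_add]; group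
    constructor
    · intro h
      have h2 : (y * w ^ a * (α k)⁻¹) * ((α k * w * (α k)⁻¹) ^ (o k * t)) ∈ H k := heq ▸ h
      exact (Subgroup.mul_mem_cancel_right _ hmem).mp h2
    · intro h
      show y * w ^ (a + o k * t) * (α k)⁻¹ ∈ H k
      rw [heq]; exact (H k).mul_mem h hmem
  set L : ℕ := N * ∏ k, o k with hL
  have hdvdL : ∀ k, o k ∣ L := fun k =>
    Dvd.dvd.mul_left (Finset.dvd_prod_of_mem o (mem_univ k)) N
  have hNL : N ∣ L := Dvd.intro _ rfl
  have hLpos : 0 < L := Nat.mul_pos (by omega) (Finset.prod_pos fun k _ => hopos k)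
  set ζ : ℂ := Complex.exp (2 * Real.pi * Complex.I / N) with hζdef
  have hζ : IsPrimitiveRoot ζ N := Complex.isPrimitiveRoot_exp N (by omega)
  have hζL : ζ ^ L = 1 := by rw [hL, pow_mul, hζ.pow_eq_one, one_pow]
  -- geometric sums of non-maximal moduli vanish
  have hgeom : ∀ k, o k ≠ N → ∑ t ∈ range (L / o k), (ζ ^ o k) ^ t = 0 := by
    intro k hk
    have hne1 : ζ ^ o k ≠ 1 :=
      hζ.pow_ne_one_of_pos_of_lt (hopos k).ne' (lt_of_le_of_ne (hle k) hk)
    rw [geom_sum_eq hne1]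
    have hone : (ζ ^ o k) ^ (L / o k) = 1 := by
      rw [← pow_mul, Nat.mul_div_cancel' (hdvdL k), hζL]
    rw [hone]; simp
  -- the per-index sums
  have hTk : ∀ k, (∑ m ∈ range L, if P k m then ζ ^ m else 0) =
      (if o k = N then ((L / N : ℕ) : ℂ) * ∑ a ∈ range N, (if P k a then ζ ^ a else 0)
       else 0) := by
    intro k
    have hLk : L = o k * (L / o k) := (Nat.mul_div_cancel' (hdvdL k)).symm
    rw [show range L = range (o k * (L / o k)) from by rw [← hLk]]
    rw [sum_range_mul_eq _ _ _ (hopos k), Finset.sum_product]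
    have hinner : ∀ a, (∑ t ∈ range (L / o k),
          if P k (a + o k * t) then ζ ^ (a + o k * t) else 0) =
        (if P k a then ζ ^ a * ∑ t ∈ range (L / o k), (ζ ^ o k) ^ t else 0) := by
      intro a
      by_cases h : P k a
      · simp only [h, if_true]
        rw [Finset.mul_sum]
        refine Finset.sum_congr rfl fun t _ => ?_
        rw [if_pos ((hper k a t).mpr h), pow_add, pow_mul]
      · simp only [h, if_false]
        exact Finset.sum_eq_zero fun t _ => if_neg (fun hh => h ((hper k a t).mp hh))
    rw [Finset.sum_congr rfl fun a _ => hinner a]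
    by_cases hk : o k = N
    · rw [if_pos hk]
      have hgone : ∑ t ∈ range (L / o k), (ζ ^ o k) ^ t = ((L / N : ℕ) : ℂ) := by
        have : ζ ^ o k = 1 := by rw [hk]; exact hζ.pow_eq_one
        rw [this]; simp [hk]
      rw [hgone, Finset.mul_sum]
      rw [show range (o k) = range N from by rw [hk]]
      refine Finset.sum_congr rfl fun a _ => ?_
      rw [mul_ite, mul_zero, mul_comm]
    · rw [if_neg hk]
      refine Finset.sum_eq_zero fun a _ => ?_
      rw [hgeom k hk, mul_zero, ite_self]
  -- total sum is zero, splits over the partition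
  have hsplit : (0 : ℂ) = ∑ k : Fin s, ∑ m ∈ range L, (if P k m then ζ ^ m else 0) := by
    have hgs : ∑ m ∈ range L, ζ ^ m = 0 := by
      rw [geom_sum_eq (hζ.ne_one hN), hζL]; simp
    have hswap : (∑ k : Fin s, ∑ m ∈ range L, if P k m then ζ ^ m else 0) =
        ∑ m ∈ range L, ζ ^ m := by
      rw [Finset.sum_comm]
      refine Finset.sum_congr rfl fun m _ => ?_
      obtain ⟨k0, hk0, hu⟩ := hpart (y * w ^ m)
      rw [Finset.sum_eq_single k0 (fun b _ hb => if_neg fun h => hb (hu b h))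
        (fun h => absurd (mem_univ k0) h)]
      exact if_pos hk0
    exact (hswap.trans hgs).symm
  have hmain : (0 : ℂ) =
      ((L / N : ℕ) : ℂ) * ∑ a ∈ range N, (if P i a then ζ ^ a else 0) +
      ((L / N : ℕ) : ℂ) * ∑ a ∈ range N, (if P j a then ζ ^ a else 0) := by
    have hvanish : ∀ k ∈ Finset.univ, k ∉ ({i, j} : Finset (Fin s)) →
        (if o k = N then ((L / N : ℕ) : ℂ) * ∑ a ∈ range N, (if P k a then ζ ^ a else 0)
         else 0) = 0 := by
      intro k _ hk
      have hkn : o k ≠ N := by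
        intro h
        have hmem : k ∈ {k : Fin s | o k = N} := h
        rw [hset] at hmem
        simp only [Set.mem_insert_iff, Set.mem_singleton_iff] at hmem
        simp only [Finset.mem_insert, Finset.mem_singleton] at hk
        tauto
      rw [if_neg hkn]
    calc (0 : ℂ) = ∑ k : Fin s,
        (if o k = N then ((L / N : ℕ) : ℂ) * ∑ a ∈ range N, (if P k a then ζ ^ a else 0)
         else 0) := hsplit.trans (Finset.sum_congr rfl fun k _ => hTk k)
      _ = ∑ k ∈ ({i, j} : Finset (Fin s)),
        (if o k = N then ((L / N : ℕ) : ℂ) * ∑ a ∈ range N, (if P k a then ζ ^ a else 0)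
         else 0) := (Finset.sum_subset (Finset.subset_univ _) hvanish).symm
      _ = _ := by rw [Finset.sum_pair hij, if_pos hoiN, if_pos hojN]
  have hP0 : P i 0 := by
    show y * w ^ 0 * (α i)⁻¹ ∈ H i
    rw [pow_zero, mul_one]; exact hy
  have hAi : (∑ a ∈ range N, if P i a then ζ ^ a else 0) = 1 := by
    rw [Finset.sum_eq_single_of_mem 0 (mem_range.mpr (by omega))]
    · rw [if_pos hP0, pow_zero]
    · intro b hb hb0
      refine if_neg fun hPb => hb0 ?_
      have hd := hdiff i b 0 hPb hP0
      rw [hoiN] at hd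
      exact nat_eq_of_dvd_sub (mem_range.mp hb) (by omega) (by simpa using hd)
  have hc0 : ((L / N : ℕ) : ℂ) ≠ 0 := by
    have : 0 < L / N := Nat.div_pos (Nat.le_of_dvd hLpos hNL) (by omega)
    exact_mod_cast this.ne'
  have hAj : (∑ a ∈ range N, if P j a then ζ ^ a else 0) = -1 := by
    rw [hAi, mul_one] at hmain
    have h2 : ((L / N : ℕ) : ℂ) * (∑ a ∈ range N, if P j a then ζ ^ a else 0) =
        ((L / N : ℕ) : ℂ) * (-1) := by linear_combination -hmain
    exact mul_left_cancel₀ hc0 h2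
  have hex : ∃ a ∈ range N, P j a := by
    by_contra h
    push_neg at h
    rw [Finset.sum_eq_zero (fun a ha => if_neg (h a ha))] at hAj
    norm_num at hAj
  obtain ⟨a0, ha0r, ha0⟩ := hex
  have hAj2 : (∑ a ∈ range N, if P j a then ζ ^ a else 0) = ζ ^ a0 := by
    rw [Finset.sum_eq_single_of_mem a0 ha0r]
    · rw [if_pos ha0]
    · intro b hb hbne
      refine if_neg fun hPb => hbne ?_
      have hd := hdiff j b a0 hPb ha0
      rw [hojN] at hd
      exact nat_eq_of_dvd_sub (mem_range.mp hb) (mem_range.mp ha0r) hd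
  have hζa0 : ζ ^ a0 = -1 := by rw [← hAj2, hAj]
  have ha0ne : a0 ≠ 0 := by
    intro h; rw [h, pow_zero] at hζa0; norm_num at hζa0
  have hNd : N ∣ a0 * 2 := by
    refine hζ.dvd_of_pow_eq_one _ ?_
    rw [pow_mul, hζa0]; norm_num
  have ha0N : a0 < N := mem_range.mp ha0r
  have ha0eq : a0 = N / 2 := by
    obtain ⟨c, hc⟩ := hNd
    have hcge : 1 ≤ c := by
      rcases Nat.eq_zero_or_pos c with h | h
      · subst h; simp at hc; omega
      · exact h
    have hcle : c < 2 := by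
      by_contra h
      push_neg at h
      have h2 : N * 2 ≤ N * c := Nat.mul_le_mul_left N h
      omega
    interval_cases c
    omega
  rw [← ha0eq]
  exact ha0

end Aux

/-- If for some `w ∈ F n` we have `o_max(w) > d_{s-3}` (0-based: `d ⟨s-4,_⟩`),
the smallest prime dividing `o_max(w)` is 2, and the number `#` of indices `i` with
`o_{*i}(w) = o_max(w)` satisfies `# = 2` or `# ≥ 4`, then the partition has multiplicity. -/
theorem multiplicity_of_omax_gt_d_sub_three_minFac_two
    (n s : ℕ) (hn : 2 ≤ n) (hs : 4 ≤ s)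
    (H : Fin s → Subgroup (FreeGroup (Fin n)))
    (α : Fin s → FreeGroup (Fin n))
    (d : Fin s → ℕ)
    (hind : ∀ i, (H i).index = d i)
    (hone : ∀ i, 1 < d i)
    (hmono : Monotone d)
    (hpart : ∀ x : FreeGroup (Fin n), ∃! i : Fin s, x * (α i)⁻¹ ∈ H i)
    (hw : ∃ (w : FreeGroup (Fin n)) (o : Fin s → ℕ) (omax : ℕ),
        (∀ i, IsLeast {m : ℕ | 0 < m ∧ α i * w ^ m * (α i)⁻¹ ∈ H i} (o i)) ∧
        (∀ i, o i ≤ omax) ∧ (∃ i, o i = omax) ∧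
        d ⟨s - 4, by omega⟩ < omax ∧ omax.minFac = 2 ∧
        (Set.ncard {i : Fin s | o i = omax} = 2 ∨ 4 ≤ Set.ncard {i : Fin s | o i = omax})) :
    ∃ i j, i ≠ j ∧ d i = d j := by
  obtain ⟨w, o, N, hleast, hle, ⟨i0, hi0⟩, hgt, hminfac, hcase⟩ := hw
  have hNpos : 0 < N := hi0 ▸ (hleast i0).1.1
  have hN1 : 1 < N := by
    have hne1 : N ≠ 1 := fun h => by rw [h] at hminfac; simp [Nat.minFac_one] at hminfac
    omega
  -- every index achieving the max lies among the top three indices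
  have hod : ∀ k, o k ≤ d k := fun k =>
    o_le_index (hleast k) (hind k) (by have := hone k; omega)
  have hsub : {k : Fin s | o k = N} ⊆
      ({⟨s - 3, by omega⟩, ⟨s - 2, by omega⟩, ⟨s - 1, by omega⟩} : Set (Fin s)) := by
    intro k hk
    have h1 : o k = N := hk
    have h4 : ¬(k ≤ (⟨s - 4, by omega⟩ : Fin s)) := by
      intro h
      have := hmono h
      have := hod k
      omega
    rw [Fin.le_def] at h4
    push_neg at h4
    have h5 : s - 4 < k.val := by simpa using h4
    have h6 := k.isLt
    simp only [Set.mem_insert_iff, Set.mem_singleton_iff, Fin.ext_iff]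
    omega
  have hcard3 : Set.ncard {k : Fin s | o k = N} ≤ 3 := by
    refine le_trans (Set.ncard_le_ncard hsub (Set.toFinite _)) ?_
    refine le_trans (Set.ncard_insert_le _ _) ?_
    have := Set.ncard_insert_le (⟨s - 2, by omega⟩ : Fin s)
      ({⟨s - 1, by omega⟩} : Set (Fin s))
    have hsing := Set.ncard_singleton (⟨s - 1, by omega⟩ : Fin s)
    omega
  rcases hcase with hcase | hcase
  swap
  · omega
  obtain ⟨i, j, hij, hSet⟩ := Set.ncard_eq_two.mp hcase
  have h1 := key_step H α w o N hN1 hleast hle hpart i j hij hSet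
  have h2 := key_step H α w o N hN1 hleast hle hpart j i hij.symm
    (by rw [hSet, Set.pair_comm])
  have hu1 : α i * w ^ (N / 2) * (α j)⁻¹ ∈ H j := by
    have := h1 (α i) (by simpa using (H i).one_mem)
    exact this
  have hu2 : α j * w ^ (N / 2) * (α i)⁻¹ ∈ H i := by
    have := h2 (α j) (by simpa using (H j).one_mem)
    exact this
  have hHij : H i ≤ H j := by
    intro h hh
    have hy' : (h * α i) * (α i)⁻¹ ∈ H i := by
      simpa [mul_assoc] using hh
    have hmem := h1 (h * α i) hy'
    have heq : h * α i * w ^ (N / 2) * (α j)⁻¹ =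
        h * (α i * w ^ (N / 2) * (α j)⁻¹) := by group
    rw [heq] at hmem
    have hfin := (H j).mul_mem hmem ((H j).inv_mem hu1)
    rwa [mul_inv_cancel_right] at hfin
  have hHji : H j ≤ H i := by
    intro h hh
    have hy' : (h * α j) * (α j)⁻¹ ∈ H j := by
      simpa [mul_assoc] using hh
    have hmem := h2 (h * α j) hy'
    have heq : h * α j * w ^ (N / 2) * (α i)⁻¹ =
        h * (α j * w ^ (N / 2) * (α i)⁻¹) := by group
    rw [heq] at hmem
    have hfin := (H i).mul_mem hmem ((H i).inv_mem hu2)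
    rwa [mul_inv_cancel_right] at hfin
  exact ⟨i, j, hij, by rw [← hind i, ← hind j, le_antisymm hHij hHji]⟩
end

section
/- Let n ≥ 2 and let {H_iα_i}_{i=1}^{s} be a coset partition of the free group F_n, where H_i < F_n has finite index d_i > 1 and α_i ∈ F_n. If there exist indices 1 ≤ j, k ≤ s with j ≠ k such that ⋂_{i=1}^{s} α_i⁻¹H_iα_i is a proper subgroup of ⋂_{i ≠ j,k} α_i⁻¹H_iα_i, then H_j = H_k; in particular d_j = d_k and the partition has multiplicity. -/
/-!
If `x` lies in `α_i⁻¹ H_i α_i`, right multiplication by `x` fixes the coset `H_i α_i`. Take `x` in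
the conjugates of all `H_i` with `i ≠ j, k` but not in the full intersection. Right translation by
`x` maps the partition to a partition and fixes every block except possibly `H_j α_j` and
`H_k α_k`, so it permutes the union of these two. A translation fixing all blocks but one fixes
the last one too, hence `x` moves both `H_j α_j` and `H_k α_k`. So `H_j α_j x ⊆ H_k α_k`: a coset
of `H_j` lies in a coset of `H_k`, whence `H_j ≤ H_k`, and symmetrically `H_k ≤ H_j`.
-/

variable {G ι : Type*} [Group G]

theorem Subgroup.mul_mul_inv_mem_iff_of_conj_mem {H : Subgroup G} {a x y : G}
    (hx : a * x * a⁻¹ ∈ H) : y * x * a⁻¹ ∈ H ↔ y * a⁻¹ ∈ H := by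
  rw [show y * x * a⁻¹ = y * a⁻¹ * (a * x * a⁻¹) by group]
  exact mul_mem_cancel_right hx

/-- The right cosets `H i * α i` partition `G`. -/
def IsRightCosetPartition (H : ι → Subgroup G) (α : ι → G) : Prop :=
  ∀ x : G, ∃! i, x * (α i)⁻¹ ∈ H i

namespace IsRightCosetPartition

variable {H : ι → Subgroup G} {α : ι → G} (hP : IsRightCosetPartition H α)
include hP

theorem eq_of_mem {x : G} {i i' : ι} (hi : x * (α i)⁻¹ ∈ H i) (hi' : x * (α i')⁻¹ ∈ H i') :
    i = i' :=
  (hP x).unique hi hi'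

theorem mul_mem_or_mul_mem {j k : ι} {x y : G}
    (hx : ∀ i, i ≠ j → i ≠ k → α i * x * (α i)⁻¹ ∈ H i) (hy : y * (α j)⁻¹ ∈ H j) :
    y * x * (α j)⁻¹ ∈ H j ∨ y * x * (α k)⁻¹ ∈ H k := by
  obtain ⟨i, hi, -⟩ := hP (y * x)
  by_cases hij : i = j
  · exact .inl (hij ▸ hi)
  by_cases hik : i = k
  · exact .inr (hik ▸ hi)
  have hyi := (Subgroup.mul_mul_inv_mem_iff_of_conj_mem (hx i hij hik)).1 hi
  exact absurd (hP.eq_of_mem hyi hy) hij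

theorem conj_mem_of_forall_ne {k : ι} {x : G}
    (hx : ∀ i, i ≠ k → α i * x * (α i)⁻¹ ∈ H i) : α k * x * (α k)⁻¹ ∈ H k := by
  have hk : α k * (α k)⁻¹ ∈ H k := by simp
  simpa using hP.mul_mem_or_mul_mem (k := k) (fun i hik _ ↦ hx i hik) hk

theorem forall_conj_mem_of_conj_mem {j k : ι} {x : G}
    (hx : ∀ i, i ≠ j → i ≠ k → α i * x * (α i)⁻¹ ∈ H i) (hxj : α j * x * (α j)⁻¹ ∈ H j) :
    ∀ i, α i * x * (α i)⁻¹ ∈ H i := by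
  have hne_k : ∀ i, i ≠ k → α i * x * (α i)⁻¹ ∈ H i := fun i hik ↦ by
    obtain rfl | hij := eq_or_ne i j
    exacts [hxj, hx i hij hik]
  intro i
  obtain rfl | hik := eq_or_ne i k
  exacts [hP.conj_mem_of_forall_ne hne_k, hne_k i hik]

theorem le_of_conj_notMem {j k : ι} {x : G}
    (hx : ∀ i, i ≠ j → i ≠ k → α i * x * (α i)⁻¹ ∈ H i) (hxj : α j * x * (α j)⁻¹ ∉ H j) :
    H j ≤ H k := by
  have key : ∀ h ∈ H j, h * (α j * x * (α k)⁻¹) ∈ H k := fun h hh ↦ by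
    have hy : h * α j * (α j)⁻¹ ∈ H j := by simpa using hh
    have hyx : h * α j * x * (α j)⁻¹ ∉ H j := by
      rwa [show h * α j * x * (α j)⁻¹ = h * (α j * x * (α j)⁻¹) by group,
        mul_mem_cancel_left hh]
    simpa only [mul_assoc] using (hP.mul_mem_or_mul_mem hx hy).resolve_left hyx
  have hc : α j * x * (α k)⁻¹ ∈ H k := by simpa using key 1 (one_mem _)
  intro h hh
  exact (mul_mem_cancel_right hc).1 (key h hh)

theorem eq_of_iInf_lt {j k : ι}
    (hlt : (⨅ i, (H i).comap (MulAut.conj (α i)).toMonoidHom) <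
      ⨅ i ∈ {i | i ≠ j ∧ i ≠ k}, (H i).comap (MulAut.conj (α i)).toMonoidHom) :
    H j = H k := by
  obtain ⟨x, hxL, hxK⟩ := SetLike.exists_of_lt hlt
  simp only [Subgroup.mem_iInf, Set.mem_ofPred_eq, Subgroup.mem_comap,
    MulEquiv.coe_toMonoidHom, MulAut.conj_apply] at hxL hxK
  have hx : ∀ i, i ≠ j → i ≠ k → α i * x * (α i)⁻¹ ∈ H i := fun i hij hik ↦ hxL i ⟨hij, hik⟩
  have hx' : ∀ i, i ≠ k → i ≠ j → α i * x * (α i)⁻¹ ∈ H i := fun i hik hij ↦ hx i hij hik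
  have hxj := fun h ↦ hxK (hP.forall_conj_mem_of_conj_mem hx h)
  have hxk := fun h ↦ hxK (hP.forall_conj_mem_of_conj_mem hx' h)
  exact le_antisymm (hP.le_of_conj_notMem hx hxj) (hP.le_of_conj_notMem hx' hxk)

end IsRightCosetPartition

theorem eq_subgroups_of_proper_intersection_general
    (n s : ℕ)
    (H : Fin s → Subgroup (FreeGroup (Fin n)))
    (α : Fin s → FreeGroup (Fin n))
    (d : Fin s → ℕ)
    (hind : ∀ i, (H i).index = d i)
    (hpart : ∀ x : FreeGroup (Fin n), ∃! i : Fin s, x * (α i)⁻¹ ∈ H i)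
    (j k : Fin s) (hjk : j ≠ k)
    (hlt : (⨅ i : Fin s, (H i).comap ((MulAut.conj (α i)).toMonoidHom)) <
        (⨅ i ∈ {i : Fin s | i ≠ j ∧ i ≠ k}, (H i).comap ((MulAut.conj (α i)).toMonoidHom))) :
    H j = H k ∧ d j = d k ∧ ∃ i i', i ≠ i' ∧ d i = d i' := by
  have heq : H j = H k := IsRightCosetPartition.eq_of_iInf_lt hpart hlt
  have hd : d j = d k := by rw [← hind j, ← hind k, heq]
  exact ⟨heq, hd, j, k, hjk, hd⟩

/-- If the intersection `⋂_{i=1}^{s} α_i⁻¹ H_i α_i` is a proper subgroup of the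
partial intersection `⋂_{i ≠ j,k} α_i⁻¹ H_i α_i` (for some `j ≠ k`), then `H j = H k`;
in particular `d j = d k` and the coset partition has multiplicity. -/
theorem eq_subgroups_of_proper_intersection
    (n s : ℕ) (hn : 2 ≤ n)
    (H : Fin s → Subgroup (FreeGroup (Fin n)))
    (α : Fin s → FreeGroup (Fin n))
    (d : Fin s → ℕ)
    (hind : ∀ i, (H i).index = d i)
    (hone : ∀ i, 1 < d i)
    (hpart : ∀ x : FreeGroup (Fin n), ∃! i : Fin s, x * (α i)⁻¹ ∈ H i)
    (j k : Fin s) (hjk : j ≠ k)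
    (hlt : (⨅ i : Fin s, (H i).comap ((MulAut.conj (α i)).toMonoidHom)) <
        (⨅ i ∈ {i : Fin s | i ≠ j ∧ i ≠ k}, (H i).comap ((MulAut.conj (α i)).toMonoidHom))) :
    H j = H k ∧ d j = d k ∧ ∃ i i', i ≠ i' ∧ d i = d i' :=
  eq_subgroups_of_proper_intersection_general n s H α d hind hpart j k hjk hlt
end

section
/- Let n ≥ 2 and let {H_iα_i}_{i=1}^{s} be a coset partition of the free group F_n, where H_i < F_n has finite index d_i > 1 and α_i ∈ F_n. If there exist indices 1 ≤ j, k ≤ s with j ≠ k such that lcm(d_j, d_k) does not divide the index [F_n : ⋂_{i ≠ j,k} α_i⁻¹H_iα_i] (which is finite, being the index of a finite intersection of finite-index subgroups), then H_j = H_k; in particular d_j = d_k and the partition has multiplicity. -/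
/-!
Write `N` for the intersection of the conjugates `α_i⁻¹ H_i α_i` with `i ≠ j, k`. Each coset
`H_i α_i` with `i ≠ j, k` is stable under right multiplication by `N`, hence so is the union
`U = H_j α_j ∪ H_k α_k` of the two remaining cosets. As `lcm(d_j, d_k) ∤ [G : N]`, say
`d_j ∤ [G : N]`; then `N` is not contained in `α_j⁻¹ H_j α_j`, so some `ν ∈ N` moves `α_j` out
of `H_j α_j`, and `α_j ν ∈ H_k α_k`. Now for `h ∈ G`, the element `h α_j` lies in `U` iff
`h α_j ν` does. If `h ∈ H_j`, then `h α_j ν ∉ H_j α_j`, so `h α_j ν ∈ H_k α_k` and `h ∈ H_k`;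
if `h ∈ H_k`, then `h α_j ∉ H_k α_k` (the cosets are disjoint), so `h α_j ∈ H_j α_j` and
`h ∈ H_j`.
-/

namespace Subgroup

variable {G : Type*} [Group G]

theorem mul_mul_inv_mem_iff_of_mem_comap_conj {K : Subgroup G} {a ν : G}
    (hν : ν ∈ K.comap (MulAut.conj a).toMonoidHom) (x : G) :
    x * ν * a⁻¹ ∈ K ↔ x * a⁻¹ ∈ K := by
  have hν' : a * ν * a⁻¹ ∈ K := by simpa using hν
  rw [show x * ν * a⁻¹ = x * a⁻¹ * (a * ν * a⁻¹) by group]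
  exact K.mul_mem_cancel_right hν'

theorem not_le_comap_conj_of_not_dvd_index {K N : Subgroup G} {a : G}
    (h : ¬ K.index ∣ N.index) : ¬ N ≤ K.comap (MulAut.conj a).toMonoidHom := fun hle =>
  h <| by
    rw [← index_comap_of_surjective (f := (MulAut.conj a).toMonoidHom) K
      (MulAut.conj a).surjective]
    exact index_dvd_of_le hle

end Subgroup

section CosetPartition

variable {G ι : Type*} [Group G] {H : ι → Subgroup G} {α : ι → G} {j k : ι} {N : Subgroup G}

theorem mul_mem_union_of_mem_union (hpart : ∀ x : G, ∃! i, x * (α i)⁻¹ ∈ H i)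
    (hN : ∀ i, i ≠ j → i ≠ k → N ≤ (H i).comap (MulAut.conj (α i)).toMonoidHom)
    {x ν : G} (hν : ν ∈ N) (hx : x * (α j)⁻¹ ∈ H j ∨ x * (α k)⁻¹ ∈ H k) :
    x * ν * (α j)⁻¹ ∈ H j ∨ x * ν * (α k)⁻¹ ∈ H k := by
  obtain ⟨i, hi, -⟩ := hpart (x * ν)
  by_cases hij : i = j
  · exact .inl (hij ▸ hi)
  by_cases hik : i = k
  · exact .inr (hik ▸ hi)
  have hxi : x * (α i)⁻¹ ∈ H i :=
    (Subgroup.mul_mul_inv_mem_iff_of_mem_comap_conj (hN i hij hik hν) x).1 hi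
  exact hx.elim (fun hx => (hij ((hpart x).unique hxi hx)).elim)
    fun hx => (hik ((hpart x).unique hxi hx)).elim

theorem eq_of_not_le_comap_conj (hpart : ∀ x : G, ∃! i, x * (α i)⁻¹ ∈ H i) (hjk : j ≠ k)
    (hN : ∀ i, i ≠ j → i ≠ k → N ≤ (H i).comap (MulAut.conj (α i)).toMonoidHom)
    (hNj : ¬ N ≤ (H j).comap (MulAut.conj (α j)).toMonoidHom) : H j = H k := by
  obtain ⟨ν, hν, hνj⟩ := SetLike.not_le_iff_exists.1 hNj
  have hjν : α j * ν * (α j)⁻¹ ∉ H j := by simpa using hνj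
  have hkν : α j * ν * (α k)⁻¹ ∈ H k :=
    (mul_mem_union_of_mem_union hpart hN hν (.inl (by simp))).resolve_left hjν
  ext h
  constructor
  · intro hh
    rcases mul_mem_union_of_mem_union hpart hN hν (x := h * α j) (.inl (by simpa using hh))
      with hj | hk
    · rw [mul_assoc h, mul_assoc h, (H j).mul_mem_cancel_left hh] at hj
      exact absurd hj hjν
    · rwa [mul_assoc h, mul_assoc h, (H k).mul_mem_cancel_right hkν] at hk
  · intro hh
    have hk : h * α j * ν * (α k)⁻¹ ∈ H k := by
      rwa [mul_assoc h, mul_assoc h, (H k).mul_mem_cancel_right hkν]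
    rcases mul_mem_union_of_mem_union hpart hN (inv_mem hν) (.inr hk) with hj | hk'
    · simpa using hj
    · rw [mul_inv_cancel_right, mul_assoc, (H k).mul_mem_cancel_left hh] at hk'
      exact absurd ((hpart (α j)).unique (by simp) hk') hjk

theorem eq_of_not_lcm_index_dvd_index (hpart : ∀ x : G, ∃! i, x * (α i)⁻¹ ∈ H i)
    (hjk : j ≠ k)
    (hN : ∀ i, i ≠ j → i ≠ k → N ≤ (H i).comap (MulAut.conj (α i)).toMonoidHom)
    (hdvd : ¬ Nat.lcm (H j).index (H k).index ∣ N.index) : H j = H k := by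
  by_cases hj : (H j).index ∣ N.index
  · have hk : ¬ (H k).index ∣ N.index := fun hk => hdvd (Nat.lcm_dvd hj hk)
    exact (eq_of_not_le_comap_conj hpart hjk.symm (fun i hik hij => hN i hij hik)
      (Subgroup.not_le_comap_conj_of_not_dvd_index hk)).symm
  · exact eq_of_not_le_comap_conj hpart hjk hN (Subgroup.not_le_comap_conj_of_not_dvd_index hj)

end CosetPartition

theorem eq_subgroups_of_lcm_not_dvd_index_general
    (n s : ℕ)
    (H : Fin s → Subgroup (FreeGroup (Fin n)))
    (α : Fin s → FreeGroup (Fin n))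
    (d : Fin s → ℕ)
    (hind : ∀ i, (H i).index = d i)
    (hpart : ∀ x : FreeGroup (Fin n), ∃! i : Fin s, x * (α i)⁻¹ ∈ H i)
    (j k : Fin s) (hjk : j ≠ k)
    (hdvd : ¬ (Nat.lcm (d j) (d k) ∣
        (⨅ i ∈ {i : Fin s | i ≠ j ∧ i ≠ k},
          (H i).comap ((MulAut.conj (α i)).toMonoidHom)).index)) :
    H j = H k ∧ d j = d k ∧ ∃ i i', i ≠ i' ∧ d i = d i' := by
  have hHjk : H j = H k := by
    refine eq_of_not_lcm_index_dvd_index hpart hjk ?_ (by simpa only [hind] using hdvd)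
    exact fun i hij hik => iInf₂_le i ⟨hij, hik⟩
  have hdjk : d j = d k := by rw [← hind, ← hind, hHjk]
  exact ⟨hHjk, hdjk, j, k, hjk, hdjk⟩

/-- If `lcm(d j, d k)` does not divide the index of the partial intersection
`⋂_{i ≠ j,k} α_i⁻¹ H_i α_i` (for some `j ≠ k`), then `H j = H k`; in particular `d j = d k`
and the coset partition has multiplicity. -/
theorem eq_subgroups_of_lcm_not_dvd_index
    (n s : ℕ) (hn : 2 ≤ n)
    (H : Fin s → Subgroup (FreeGroup (Fin n)))
    (α : Fin s → FreeGroup (Fin n))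
    (d : Fin s → ℕ)
    (hind : ∀ i, (H i).index = d i)
    (hone : ∀ i, 1 < d i)
    (hpart : ∀ x : FreeGroup (Fin n), ∃! i : Fin s, x * (α i)⁻¹ ∈ H i)
    (j k : Fin s) (hjk : j ≠ k)
    (hdvd : ¬ (Nat.lcm (d j) (d k) ∣
        (⨅ i ∈ {i : Fin s | i ≠ j ∧ i ≠ k},
          (H i).comap ((MulAut.conj (α i)).toMonoidHom)).index)) :
    H j = H k ∧ d j = d k ∧ ∃ i i', i ≠ i' ∧ d i = d i' :=
  eq_subgroups_of_lcm_not_dvd_index_general n s H α d hind hpart j k hjk hdvd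
end

section
/- Let N ⊴ F_n be a normal subgroup of finite index m, let H be a subgroup of F_n of finite index d with N ≤ H, and let w, g ∈ F_n. Let o_N be the least positive integer with w^{o_N} ∈ N and let k be the least positive integer with w^k ∈ g⁻¹Hg. Then k divides o_N, and for every y ∈ Hg: (1) the right cosets N y w^j, 0 ≤ j < o_N, are pairwise distinct; (2) exactly o_N / k of the exponents j ∈ {0, 1, …, o_N − 1} satisfy y w^j ∈ Hg; (3) the number of distinct orbits of right multiplication by w on the right cosets of N that contain at least one right coset of N included in Hg equals (m/d) / (o_N/k). -/
section Aux

lemma count_fibers {α β : Type*} (A : Set α) (f : α → β) (hA : A.Finite) (c : ℕ)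
    (h : ∀ a ∈ A, {a' | a' ∈ A ∧ f a' = f a}.ncard = c) :
    A.ncard = (f '' A).ncard * c := by
  classical
  have hx : ∀ x ∈ hA.toFinset, f x ∈ hA.toFinset.image f := by
    intro x hxm; exact Finset.mem_image_of_mem f hxm
  have h1 := Finset.card_eq_sum_card_fiberwise hx
  have h2 : ∀ b ∈ hA.toFinset.image f, (hA.toFinset.filter (fun x => f x = b)).card = c := by
    intro b hb
    obtain ⟨a, ha, rfl⟩ := Finset.mem_image.mp hb
    have hc := h a (hA.mem_toFinset.mp ha)
    rw [← hc]
    have he : {a' | a' ∈ A ∧ f a' = f a} = ↑(hA.toFinset.filter (fun x => f x = f a)) := by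
      ext x; simp [hA.mem_toFinset]
    rw [he, Set.ncard_coe_finset]
  rw [Finset.sum_congr rfl h2, Finset.sum_const, smul_eq_mul] at h1
  have h3 : A.ncard = hA.toFinset.card := Set.ncard_eq_toFinset_card A hA
  have h4 : (f '' A).ncard = (hA.toFinset.image f).card := by
    conv_lhs => rw [← hA.coe_toFinset, ← Finset.coe_image, Set.ncard_coe_finset]
  rw [h3, h4, h1]

variable {G : Type*} [Group G]

/-- The right coset `N z` as a set. -/
def cosetN (N : Subgroup G) (z : G) : Set G := {x | x * z⁻¹ ∈ N}

/-- The `w`-orbit of the right coset `N z`. -/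
def orbSet (N : Subgroup G) (w z : G) : Set (Set G) :=
  {S | ∃ j : ℤ, S = cosetN N (z * w ^ j)}

/-- A function on sets sending the coset `N z` to its orbit. -/
def stepMap (N : Subgroup G) (w : G) (S : Set G) : Set (Set G) :=
  {S' | ∃ j : ℤ, S' = {x | ∃ s ∈ S, x * (s * w ^ j)⁻¹ ∈ N}}

lemma mem_cosetN_self (N : Subgroup G) (z : G) : z ∈ cosetN N z := by
  simp only [cosetN, Set.mem_setOf_eq, mul_inv_cancel]
  exact N.one_mem

lemma cosetN_eq_iff {N : Subgroup G} {a b : G} : cosetN N a = cosetN N b ↔ a * b⁻¹ ∈ N := by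
  constructor
  · intro h
    have ha : a ∈ cosetN N b := h ▸ mem_cosetN_self N a
    exact ha
  · intro h; ext x
    simp only [cosetN, Set.mem_setOf_eq]
    constructor
    · intro hx
      have e : x * a⁻¹ * (a * b⁻¹) = x * b⁻¹ := by group
      have := mul_mem hx h; rwa [e] at this
    · intro hx
      have e : x * b⁻¹ * (a * b⁻¹)⁻¹ = x * a⁻¹ := by group
      have := mul_mem hx (N.inv_mem h); rwa [e] at this

lemma stepMap_cosetN (N : Subgroup G) (w z : G) :
    stepMap N w (cosetN N z) = orbSet N w z := by
  have key : ∀ j : ℤ, {x | ∃ s ∈ cosetN N z, x * (s * w ^ j)⁻¹ ∈ N} = cosetN N (z * w ^ j) := by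
    intro j; ext x
    simp only [cosetN, Set.mem_setOf_eq]
    constructor
    · rintro ⟨s, hs, hx⟩
      have e : x * (s * w ^ j)⁻¹ * (s * z⁻¹) = x * (z * w ^ j)⁻¹ := by group
      have := mul_mem hx hs; rwa [e] at this
    · intro hx
      exact ⟨z, mem_cosetN_self N z, hx⟩
  ext S'
  simp only [stepMap, orbSet, Set.mem_setOf_eq]
  constructor
  · rintro ⟨j, rfl⟩; exact ⟨j, (key j).symm ▸ rfl⟩
  · rintro ⟨j, rfl⟩; exact ⟨j, (key j).symm⟩

lemma orbSet_shift (N : Subgroup G) (w z : G) (t : ℤ) :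
    orbSet N w (z * w ^ t) = orbSet N w z := by
  ext S
  simp only [orbSet, Set.mem_setOf_eq]
  constructor
  · rintro ⟨j, rfl⟩; exact ⟨t + j, by rw [zpow_add, mul_assoc]⟩
  · rintro ⟨j, rfl⟩; exact ⟨-t + j, by rw [zpow_add, ← mul_assoc, mul_assoc z, ← zpow_add,
      add_neg_cancel, zpow_zero, mul_one]⟩

lemma mem_orbSet_self (N : Subgroup G) (w z : G) : cosetN N z ∈ orbSet N w z :=
  ⟨0, by simp⟩

lemma least_pow_dvd {K : Subgroup G} {u : G} {k : ℕ}
    (hk : IsLeast {o : ℕ | 0 < o ∧ u ^ o ∈ K} k) :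
    ∀ a : ℕ, u ^ a ∈ K → k ∣ a := by
  intro a ha
  have hk0 : 0 < k := hk.1.1
  have hr : u ^ (a % k) ∈ K := by
    have hsplit : a = k * (a / k) + a % k := (Nat.div_add_mod a k).symm
    have h2 : u ^ (k * (a / k)) ∈ K := by
      rw [pow_mul]; exact pow_mem hk.1.2 _
    have e : u ^ (k * (a / k)) * u ^ (a % k) = u ^ a := by
      rw [← pow_add, ← hsplit]
    have h3 := mul_mem (K.inv_mem h2) ha
    rwa [← e, inv_mul_cancel_left] at h3
  rcases Nat.eq_zero_or_pos (a % k) with h | h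
  · exact Nat.dvd_of_mod_eq_zero h
  · exact absurd (hk.2 ⟨h, hr⟩) (Nat.not_le.2 (Nat.mod_lt a hk0))

lemma least_zpow_dvd {K : Subgroup G} {u : G} {k : ℕ}
    (hk : IsLeast {o : ℕ | 0 < o ∧ u ^ o ∈ K} k) :
    ∀ a : ℤ, u ^ a ∈ K → (k : ℤ) ∣ a := by
  intro a ha
  have hnat : u ^ a.natAbs ∈ K := by
    rcases Int.natAbs_eq a with h | h
    · have : u ^ (a.natAbs : ℤ) ∈ K := by rw [← h]; exact ha
      rwa [zpow_natCast] at this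
    · have : u ^ (a.natAbs : ℤ) ∈ K := by
        rw [show (a.natAbs : ℤ) = -a by omega, zpow_neg]; exact K.inv_mem ha
      rwa [zpow_natCast] at this
  have := least_pow_dvd hk a.natAbs hnat
  exact Int.dvd_natAbs.mp (Int.natCast_dvd_natCast.mpr this)

end Aux

/-- For `N ⊴ F n` of index `m`, `H ≤ F n` of index `d` with `N ≤ H`, `w, g ∈ F n`,
`oN` the least positive integer with `w ^ oN ∈ N` and `k` the least positive integer with
`w ^ k ∈ g⁻¹ H g`: `k ∣ oN`, and for every `y ∈ H g`: (1) the right cosets `N y w^j`,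
`0 ≤ j < oN`, are pairwise distinct; (2) exactly `oN / k` of the exponents `0 ≤ j < oN`
satisfy `y w^j ∈ H g`; and (3) the number of `w`-orbits of right cosets of `N` containing
some coset of `N` included in `H g` equals `(m / d) / (oN / k)`. -/
theorem combined_graph_loops
    (n : ℕ) (N H : Subgroup (FreeGroup (Fin n))) [N.Normal]
    (m d : ℕ) (hm : N.index = m) (hm0 : 0 < m) (hd : H.index = d) (hd0 : 0 < d)
    (hNH : N ≤ H) (w g : FreeGroup (Fin n)) (oN k : ℕ)
    (hoN : IsLeast {o : ℕ | 0 < o ∧ w ^ o ∈ N} oN)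
    (hk : IsLeast {o : ℕ | 0 < o ∧ g * w ^ o * g⁻¹ ∈ H} k) :
    k ∣ oN ∧
    (∀ y : FreeGroup (Fin n), y * g⁻¹ ∈ H →
      (∀ j₁ j₂ : ℕ, j₁ < oN → j₂ < oN → (y * w ^ j₁) * (y * w ^ j₂)⁻¹ ∈ N → j₁ = j₂) ∧
      Set.ncard {j : ℕ | j < oN ∧ y * w ^ j * g⁻¹ ∈ H} = oN / k) ∧
    Set.ncard {T : Set (Set (FreeGroup (Fin n))) |
      (∃ z : FreeGroup (Fin n), T = {S | ∃ j : ℤ, S = {x | x * (z * w ^ j)⁻¹ ∈ N}}) ∧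
      ∃ S ∈ T, S ⊆ {x : FreeGroup (Fin n) | x * g⁻¹ ∈ H}} = (m / d) / (oN / k) := by
  classical
  have hNn : N.Normal := inferInstance
  -- basic positivity
  have hoN0 : 0 < oN := hoN.1.1
  have hk0 : 0 < k := hk.1.1
  -- conjugated least
  have hk' : IsLeast {o : ℕ | 0 < o ∧ (g * w * g⁻¹) ^ o ∈ H} k := by
    have : {o : ℕ | 0 < o ∧ (g * w * g⁻¹) ^ o ∈ H} = {o : ℕ | 0 < o ∧ g * w ^ o * g⁻¹ ∈ H} := by
      ext o; rw [Set.mem_setOf_eq, Set.mem_setOf_eq, conj_pow]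
    rw [this]; exact hk
  -- divisibility facts
  have hdvdN : ∀ a : ℕ, w ^ a ∈ N → oN ∣ a := least_pow_dvd hoN
  have hdvdNz : ∀ a : ℤ, w ^ a ∈ N → (oN : ℤ) ∣ a := least_zpow_dvd hoN
  have hdvdH : ∀ a : ℕ, g * w ^ a * g⁻¹ ∈ H → k ∣ a := by
    intro a ha
    exact least_pow_dvd hk' a (by rw [conj_pow]; exact ha)
  have hdvdHz : ∀ a : ℤ, g * w ^ a * g⁻¹ ∈ H → (k : ℤ) ∣ a := by
    intro a ha
    exact least_zpow_dvd hk' a (by rw [conj_zpow]; exact ha)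
  have hNmem : ∀ a : ℤ, (oN : ℤ) ∣ a → w ^ a ∈ N := by
    rintro a ⟨t, rfl⟩
    rw [zpow_mul, zpow_natCast]
    exact zpow_mem hoN.1.2 t
  have hHconj : ∀ a : ℕ, k ∣ a → g * w ^ a * g⁻¹ ∈ H := by
    rintro a ⟨q, rfl⟩
    rw [pow_mul, ← conj_pow]
    exact pow_mem hk.1.2 q
  -- k ∣ oN
  have hkdvd : k ∣ oN := by
    apply hdvdH
    exact hNH (hNn.conj_mem _ hoN.1.2 g)
  have hq0 : 0 < oN / k := Nat.div_pos (Nat.le_of_dvd hoN0 hkdvd) hk0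
  -- generic injectivity of exponents mod N
  have hinj : ∀ j₁ j₂ : ℕ, j₁ < oN → j₂ < oN → w ^ j₁ * (w ^ j₂)⁻¹ ∈ N → j₁ = j₂ := by
    intro j₁ j₂ h1 h2 hmem
    have e : w ^ j₁ * (w ^ j₂)⁻¹ = w ^ ((j₁ : ℤ) - (j₂ : ℤ)) := by
      rw [zpow_sub, zpow_natCast, zpow_natCast]
    rw [e] at hmem
    have hdvd := hdvdNz _ hmem
    have habs : oN ∣ ((j₁ : ℤ) - (j₂ : ℤ)).natAbs :=
      Int.natCast_dvd_natCast.mp (Int.dvd_natAbs.mpr hdvd)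
    have hlt : ((j₁ : ℤ) - (j₂ : ℤ)).natAbs < oN := by omega
    have := Nat.eq_zero_of_dvd_of_lt habs hlt
    omega
  -- membership criterion
  have hmemiff : ∀ y : (FreeGroup (Fin n)), y * g⁻¹ ∈ H → ∀ j : ℕ, (y * w ^ j * g⁻¹ ∈ H ↔ k ∣ j) := by
    intro y hy j
    constructor
    · intro hj
      apply hdvdH
      have e : g * w ^ j * g⁻¹ = (y * g⁻¹)⁻¹ * (y * w ^ j * g⁻¹) := by group
      rw [e]; exact mul_mem (H.inv_mem hy) hj
    · intro hj
      have e : y * w ^ j * g⁻¹ = (y * g⁻¹) * (g * w ^ j * g⁻¹) := by group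
      rw [e]; exact mul_mem hy (hHconj j hj)
  refine ⟨hkdvd, ?_, ?_⟩
  · -- parts 1 and 2
    intro y hy
    constructor
    · intro j₁ j₂ h1 h2 hmem
      apply hinj j₁ j₂ h1 h2
      have e : w ^ j₁ * (w ^ j₂)⁻¹ = y⁻¹ * ((y * w ^ j₁) * (y * w ^ j₂)⁻¹) * y⁻¹⁻¹ := by group
      rw [e]; exact hNn.conj_mem _ hmem y⁻¹
    · -- count of exponents
      have hset : {j : ℕ | j < oN ∧ y * w ^ j * g⁻¹ ∈ H}
          = (fun i : ℕ => i * k) '' Set.Iio (oN / k) := by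
        ext j
        simp only [Set.mem_setOf_eq, Set.mem_image, Set.mem_Iio]
        constructor
        · rintro ⟨hj, hmem⟩
          obtain ⟨q, rfl⟩ := (hmemiff y hy _).mp hmem
          refine ⟨q, ?_, mul_comm q k⟩
          exact (Nat.lt_div_iff_mul_lt' hkdvd q).mpr hj
        · rintro ⟨i, hi, rfl⟩
          refine ⟨?_, (hmemiff y hy _).mpr ⟨i, mul_comm i k⟩⟩
          rw [mul_comm]
          exact (Nat.lt_div_iff_mul_lt' hkdvd i).mp hi
      rw [hset, Set.ncard_image_of_injective _
        (fun a b hab => Nat.eq_of_mul_eq_mul_right hk0 hab)]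
      rw [← Finset.coe_Iio, Set.ncard_coe_finset, Nat.card_Iio]
  · -- part 3
    set Hg : Set (FreeGroup (Fin n)) := {x : (FreeGroup (Fin n)) | x * g⁻¹ ∈ H} with hHg_def
    have hHgN : ∀ z ∈ Hg, cosetN N z ⊆ Hg := by
      intro z hz x hx
      have e : (x * z⁻¹) * (z * g⁻¹) = x * g⁻¹ := by group
      have := mul_mem (hNH hx) hz
      rwa [e] at this
    -- finiteness of quotient
    have hQfin : Finite ((FreeGroup (Fin n)) ⧸ N) := by
      apply Nat.finite_of_card_ne_zero
      rw [← Subgroup.index_eq_card, hm]; omega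
    -- coset as preimage of point
    have hcoset_pi : ∀ z : (FreeGroup (Fin n)), cosetN N z = (QuotientGroup.mk : (FreeGroup (Fin n)) → (FreeGroup (Fin n)) ⧸ N) ⁻¹' {(z : (FreeGroup (Fin n)) ⧸ N)} := by
      intro z; ext x
      simp only [cosetN, Set.mem_setOf_eq, Set.mem_preimage, Set.mem_singleton_iff]
      rw [QuotientGroup.eq]
      constructor
      · intro h
        have h2 := N.inv_mem h
        rw [mul_inv_rev, inv_inv] at h2
        exact hNn.mem_comm h2
      · intro h
        have h2 : z * x⁻¹ ∈ N := hNn.mem_comm h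
        have h3 := N.inv_mem h2
        rwa [mul_inv_rev, inv_inv] at h3
    set 𝒞 : Set (Set (FreeGroup (Fin n))) := cosetN N '' Hg with h𝒞_def
    have h𝒞alt : 𝒞 = (fun q : (FreeGroup (Fin n)) ⧸ N => (QuotientGroup.mk : (FreeGroup (Fin n)) → (FreeGroup (Fin n)) ⧸ N) ⁻¹' {q})
        '' ((QuotientGroup.mk : (FreeGroup (Fin n)) → (FreeGroup (Fin n)) ⧸ N) '' Hg) := by
      rw [h𝒞_def, Set.image_image]
      exact Set.image_congr fun z _ => hcoset_pi z
    have h𝒞fin : 𝒞.Finite := by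
      rw [h𝒞alt]
      exact Set.Finite.image _ (Set.toFinite _)
    -- cardinality of 𝒞
    have hpreinj : Function.Injective (fun q : (FreeGroup (Fin n)) ⧸ N => (QuotientGroup.mk : (FreeGroup (Fin n)) → (FreeGroup (Fin n)) ⧸ N) ⁻¹' {q}) := by
      intro q₁ q₂ h
      obtain ⟨x, rfl⟩ := QuotientGroup.mk_surjective q₁
      have h' : (QuotientGroup.mk ⁻¹' {(x : (FreeGroup (Fin n)) ⧸ N)} : Set (FreeGroup (Fin n)))
          = QuotientGroup.mk ⁻¹' {q₂} := h
      have hx : x ∈ (QuotientGroup.mk ⁻¹' {(x : (FreeGroup (Fin n)) ⧸ N)} : Set (FreeGroup (Fin n))) := rfl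
      rw [h'] at hx
      exact hx
    have h𝒞card : 𝒞.ncard = m / d := by
      rw [h𝒞alt, Set.ncard_image_of_injective _ hpreinj]
      have himg : (QuotientGroup.mk : (FreeGroup (Fin n)) → (FreeGroup (Fin n)) ⧸ N) '' Hg
          = (fun q => q * (g : (FreeGroup (Fin n)) ⧸ N)) '' ((QuotientGroup.mk : (FreeGroup (Fin n)) → (FreeGroup (Fin n)) ⧸ N) '' (H : Set (FreeGroup (Fin n)))) := by
        rw [Set.image_image]
        ext q
        simp only [Set.mem_image, hHg_def, Set.mem_setOf_eq, SetLike.mem_coe]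
        constructor
        · rintro ⟨x, hx, rfl⟩
          exact ⟨x * g⁻¹, hx, by rw [← QuotientGroup.mk_mul]; congr 1; group⟩
        · rintro ⟨h, hh, rfl⟩
          exact ⟨h * g, by simpa using hh, by rw [QuotientGroup.mk_mul]⟩
      rw [himg, Set.ncard_image_of_injective _ (mul_left_injective (g : (FreeGroup (Fin n)) ⧸ N))]
      have hHimg : (QuotientGroup.mk : (FreeGroup (Fin n)) → (FreeGroup (Fin n)) ⧸ N) '' (H : Set (FreeGroup (Fin n)))
          = ↑(H.map (QuotientGroup.mk' N)) := by
        rw [Subgroup.coe_map, QuotientGroup.coe_mk']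
      rw [hHimg, ← Nat.card_coe_set_eq]
      -- Nat.card of the image subgroup equals relindex
      have hiso : Nat.card (H.map (QuotientGroup.mk' N)) = N.relIndex H := by
        set φ := (QuotientGroup.mk' N).comp H.subtype with hφ
        have hrange : φ.range = H.map (QuotientGroup.mk' N) := by
          rw [hφ, MonoidHom.range_comp, Subgroup.range_subtype]
        have hker : φ.ker = N.subgroupOf H := by
          ext x
          simp [hφ, MonoidHom.mem_ker, QuotientGroup.eq_one_iff, Subgroup.mem_subgroupOf]
        rw [← hrange, ← Nat.card_congr (QuotientGroup.quotientKerEquivRange φ).toEquiv, hker]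
        rw [Subgroup.relIndex, Subgroup.index_eq_card]
      rw [SetLike.coe_sort_coe, hiso]
      have hrel := Subgroup.relIndex_mul_index hNH
      rw [hm, hd] at hrel
      rw [← hrel, Nat.mul_div_cancel _ hd0]
    -- fibers of stepMap on 𝒞
    have hfiber : ∀ S ∈ 𝒞, {S' | S' ∈ 𝒞 ∧ stepMap N w S' = stepMap N w S}.ncard = oN / k := by
      rintro S ⟨z, hz, rfl⟩
      have hEq : {S' | S' ∈ 𝒞 ∧ stepMap N w S' = stepMap N w (cosetN N z)}
          = (fun i : ℕ => cosetN N (z * w ^ (i * k))) '' Set.Iio (oN / k) := by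
        ext S'
        simp only [Set.mem_setOf_eq, Set.mem_image, Set.mem_Iio]
        constructor
        · rintro ⟨⟨z', hz', rfl⟩, hstep⟩
          rw [stepMap_cosetN, stepMap_cosetN] at hstep
          obtain ⟨j, hj⟩ : cosetN N z' ∈ orbSet N w z := hstep ▸ mem_orbSet_self N w z'
          have h1 : z' * (z * w ^ j)⁻¹ ∈ N := cosetN_eq_iff.mp hj
          have h2 : (z * w ^ j) * g⁻¹ ∈ H := by
            have e : (z * w ^ j) * g⁻¹ = (z' * (z * w ^ j)⁻¹)⁻¹ * (z' * g⁻¹) := by group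
            rw [e]; exact mul_mem (H.inv_mem (hNH h1)) hz'
          have h3 : g * w ^ j * g⁻¹ ∈ H := by
            have e : g * w ^ j * g⁻¹ = (z * g⁻¹)⁻¹ * ((z * w ^ j) * g⁻¹) := by group
            rw [e]; exact mul_mem (H.inv_mem hz) h2
          obtain ⟨t, ht⟩ := hdvdHz j h3
          -- reduce j modulo oN
          obtain ⟨q, hq⟩ : (oN : ℤ) ∣ j - j % (oN : ℤ) := Int.dvd_self_sub_of_emod_eq rfl
          have hklt : (k : ℤ) ∣ j % (oN : ℤ) := by
            have h5 : (k : ℤ) ∣ j := ⟨t, ht⟩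
            have h6 : (k : ℤ) ∣ (oN : ℤ) := Int.natCast_dvd_natCast.mpr hkdvd
            have h7 : (k : ℤ) ∣ j - j % (oN : ℤ) := dvd_trans h6 ⟨q, hq⟩
            have h8 := dvd_sub h5 h7
            simpa using h8
          obtain ⟨s, hs⟩ := hklt
          have hr0 : 0 ≤ j % (oN : ℤ) := Int.emod_nonneg j (by positivity)
          have hrlt : j % (oN : ℤ) < (oN : ℤ) := Int.emod_lt_of_pos j (by positivity)
          have hkz : (0 : ℤ) < (k : ℤ) := by exact_mod_cast hk0
          have hs0 : 0 ≤ s := by nlinarith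
          refine ⟨s.toNat, ?_, ?_⟩
          · -- s.toNat < oN / k
            have hkq : k * (oN / k) = oN := Nat.mul_div_cancel' hkdvd
            have hks : (k : ℤ) * s < (oN : ℤ) := by rw [← hs]; exact hrlt
            have hslt : s < ((oN / k : ℕ) : ℤ) := by
              by_contra hcon
              push_neg at hcon
              have : ((oN / k : ℕ) : ℤ) * (k : ℤ) ≤ s * k := by
                apply mul_le_mul_of_nonneg_right hcon (by positivity)
              have hcast : ((oN / k : ℕ) : ℤ) * (k : ℤ) = (oN : ℤ) := by
                have h9 := congrArg (Nat.cast : ℕ → ℤ) hkq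
                push_cast at h9
                rw [mul_comm]; exact h9
              nlinarith [mul_comm s (k : ℤ)]
            omega
          · -- cosetN N (z * w ^ (s.toNat * k)) = cosetN N z'
            rw [hj]
            apply cosetN_eq_iff.mpr
            have e : z * w ^ (s.toNat * k) * (z * w ^ j)⁻¹
                = z * (w ^ ((s.toNat * k : ℕ) : ℤ) * (w ^ j)⁻¹) * z⁻¹ := by
              rw [zpow_natCast]; group
            rw [e]
            apply hNn.conj_mem
            have e2 : w ^ ((s.toNat * k : ℕ) : ℤ) * (w ^ j)⁻¹ = w ^ (((s.toNat * k : ℕ) : ℤ) - j) := by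
              rw [zpow_sub]
            rw [e2]
            apply hNmem
            have hcast : ((s.toNat * k : ℕ) : ℤ) = j % (oN : ℤ) := by
              push_cast
              rw [Int.toNat_of_nonneg hs0, hs]; ring
            rw [hcast]
            refine ⟨-q, ?_⟩
            rw [mul_neg, ← hq]; ring
        · rintro ⟨i, hi, rfl⟩
          have hik : i * k < oN := by
            rw [mul_comm]
            exact (Nat.lt_div_iff_mul_lt' hkdvd i).mp hi
          have hmem : z * w ^ (i * k) ∈ Hg := by
            show z * w ^ (i * k) * g⁻¹ ∈ H
            exact (hmemiff z hz _).mpr ⟨i, mul_comm i k⟩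
          refine ⟨⟨z * w ^ (i * k), hmem, rfl⟩, ?_⟩
          rw [stepMap_cosetN, stepMap_cosetN]
          have e : z * w ^ (i * k) = z * w ^ ((i * k : ℕ) : ℤ) := by
            rw [zpow_natCast]
          rw [e, orbSet_shift]
      rw [hEq]
      rw [Set.ncard_image_of_injOn, ← Finset.coe_Iio, Set.ncard_coe_finset, Nat.card_Iio]
      intro i₁ h₁ i₂ h₂ hc
      simp only [Set.mem_Iio] at h₁ h₂
      have h1 : i₁ * k < oN := by
        rw [mul_comm]; exact (Nat.lt_div_iff_mul_lt' hkdvd i₁).mp h₁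
      have h2 : i₂ * k < oN := by
        rw [mul_comm]; exact (Nat.lt_div_iff_mul_lt' hkdvd i₂).mp h₂
      have hN' : w ^ (i₁ * k) * (w ^ (i₂ * k))⁻¹ ∈ N := by
        have h3 := cosetN_eq_iff.mp hc
        have e : w ^ (i₁ * k) * (w ^ (i₂ * k))⁻¹
            = z⁻¹ * (z * w ^ (i₁ * k) * (z * w ^ (i₂ * k))⁻¹) * z⁻¹⁻¹ := by group
        rw [e]; exact hNn.conj_mem _ h3 z⁻¹
      have := hinj _ _ h1 h2 hN'
      exact Nat.eq_of_mul_eq_mul_right hk0 this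
    -- put it together
    have hcount := count_fibers 𝒞 (stepMap N w) h𝒞fin (oN / k) hfiber
    have himg : stepMap N w '' 𝒞
        = {T : Set (Set (FreeGroup (Fin n))) |
            (∃ z : (FreeGroup (Fin n)), T = {S | ∃ j : ℤ, S = {x | x * (z * w ^ j)⁻¹ ∈ N}}) ∧
            ∃ S ∈ T, S ⊆ {x : (FreeGroup (Fin n)) | x * g⁻¹ ∈ H}} := by
      ext T
      simp only [Set.mem_image, Set.mem_setOf_eq]
      constructor
      · rintro ⟨S, ⟨z, hz, rfl⟩, rfl⟩
        rw [stepMap_cosetN]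
        refine ⟨⟨z, rfl⟩, cosetN N z, mem_orbSet_self N w z, hHgN z hz⟩
      · rintro ⟨⟨z, rfl⟩, S, hS, hSsub⟩
        obtain ⟨j, rfl⟩ := hS
        have hz' : z * w ^ j ∈ Hg := hSsub (mem_cosetN_self N _)
        refine ⟨cosetN N (z * w ^ j), ⟨z * w ^ j, hz', rfl⟩, ?_⟩
        rw [stepMap_cosetN, orbSet_shift]
        rfl
    rw [himg] at hcount
    rw [h𝒞card] at hcount
    rw [hcount, Nat.mul_div_cancel _ hq0]
end

section
/- Let n ≥ 2 and let {H_iα_i}_{i=1}^{s} be a coset partition of the free group F_n, where H_i < F_n has finite index d_i > 1 and α_i ∈ F_n. Let N = ⋂_{i=1}^{s} ⋂_{g ∈ F_n} g⁻¹H_ig (the intersection of the normal cores of the H_i), a normal subgroup of finite index in F_n. Let w ∈ F_n with w ∉ ⋂_{i=1}^{s} α_i⁻¹H_iα_i, let o_N be the least positive integer with w^{o_N} ∈ N, and let o_{*i}(w) be the least positive integer m with w^m ∈ α_i⁻¹H_iα_i. Then for every y ∈ F_n, setting Y(y) = {1 ≤ i ≤ s : y w^j ∈ H_iα_i for some integer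 j}, one has Σ_{i ∈ Y(y)} o_N / o_{*i}(w) = o_N. -/
/-!
For each `i`, the exponents `j` with `y * w ^ j ∈ H i * α i` form, when there are any, a single
residue class modulo `o i`: two of them differ by `m` exactly when `α i * w ^ m * (α i)⁻¹ ∈ H i`.
Since `w ^ oN` lies in every conjugate of every `H i`, each `o i` divides `oN`, so such a class
meets `{0, …, oN - 1}` in exactly `oN / o i` points. As the cosets partition the group, every
exponent in `{0, …, oN - 1}` lies in exactly one of these classes, whence the sum is `oN`.
-/

open Finset

theorem Finset.sum_card_filter_of_existsUnique {ι α : Type*} {s : Finset α} {t : Finset ι}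
    {P : ι → α → Prop} [∀ i, DecidablePred (P i)] (h : ∀ x ∈ s, ∃! i, i ∈ t ∧ P i x) :
    ∑ i ∈ t, #{x ∈ s | P i x} = #s := by
  simp only [card_filter]
  rw [sum_comm, card_eq_sum_ones]
  refine sum_congr rfl fun x hx => ?_
  rw [← card_filter, card_eq_one_iff_existsUnique]
  simpa only [mem_filter] using h x hx

theorem card_filter_range_intCast_dvd_sub {q N : ℕ} (hq : 0 < q) (hqN : q ∣ N) (a : ℤ) :
    #{j ∈ range N | (q : ℤ) ∣ ((j : ℕ) : ℤ) - a} = N / q := by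
  have hmodEq : ∀ j : ℕ, (q : ℤ) ∣ j - a ↔ j ≡ (a % q).toNat [MOD q] := fun j => by
    rw [← Int.natCast_modEq_iff, Int.toNat_of_nonneg (Int.emod_nonneg a (by omega)),
      ← Int.modEq_iff_dvd, Int.modEq_comm]
    exact ⟨fun h => h.trans (Int.mod_modEq a q).symm, fun h => h.trans (Int.mod_modEq a q)⟩
  rw [filter_congr fun j _ => hmodEq j, ← Nat.count_eq_card_filter_range,
    Nat.count_modEq_card _ hq, Nat.mod_eq_zero_of_dvd hqN]
  simp

section Group

variable {G : Type*} [Group G] {K : Subgroup G}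

theorem zpow_mem_iff_dvd_of_isLeast_s15 {c : G} {q : ℕ}
    (hq : IsLeast {m : ℕ | 0 < m ∧ c ^ m ∈ K} q) (m : ℤ) : c ^ m ∈ K ↔ (q : ℤ) ∣ m := by
  obtain ⟨⟨hq0, hcq⟩, hmin⟩ := hq
  have hrem_nonneg : 0 ≤ m % q := Int.emod_nonneg m (by omega)
  have hrem_lt : m % q < q := Int.emod_lt_of_pos m (by omega)
  have hsplit : c ^ m = c ^ (m % q).toNat * (c ^ q) ^ (m / q) := by
    rw [← zpow_natCast, Int.toNat_of_nonneg hrem_nonneg, ← zpow_natCast, ← zpow_mul,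
      ← zpow_add, Int.emod_add_mul_ediv]
  rw [hsplit, K.mul_mem_cancel_right (zpow_mem hcq _), Int.dvd_iff_emod_eq_zero]
  constructor
  · intro hmem
    by_contra hne
    have := hmin ⟨by omega, hmem⟩
    omega
  · intro hzero
    simp [hzero]

theorem card_filter_range_mul_pow_mem [DecidablePred (· ∈ K)] {a y w : G} {q N : ℕ} {j₀ : ℤ}
    (hq : IsLeast {m : ℕ | 0 < m ∧ (a * w * a⁻¹) ^ m ∈ K} q) (hqN : q ∣ N)
    (hj₀ : y * w ^ j₀ * a⁻¹ ∈ K) :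
    #{j ∈ range N | y * w ^ j * a⁻¹ ∈ K} = N / q := by
  have hmem : ∀ j : ℕ, y * w ^ j * a⁻¹ ∈ K ↔ (q : ℤ) ∣ j - j₀ := fun j => by
    have hfactor : y * w ^ (j : ℤ) * a⁻¹ = (y * w ^ j₀ * a⁻¹) * (a * w * a⁻¹) ^ ((j : ℤ) - j₀) := by
      rw [conj_zpow]
      group
    rw [← zpow_natCast, hfactor, K.mul_mem_cancel_left hj₀, zpow_mem_iff_dvd_of_isLeast_s15 hq]
  rw [filter_congr fun j _ => hmem j]
  exact card_filter_range_intCast_dvd_sub hq.1.1 hqN j₀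

end Group

open scoped Classical in
theorem loop_equation_general
    (n s : ℕ)
    (H : Fin s → Subgroup (FreeGroup (Fin n)))
    (α : Fin s → FreeGroup (Fin n))
    (hpart : ∀ x : FreeGroup (Fin n), ∃! i : Fin s, x * (α i)⁻¹ ∈ H i)
    (w : FreeGroup (Fin n))
    (oN : ℕ)
    (hoN : IsLeast {o : ℕ | 0 < o ∧
        w ^ o ∈ ⨅ i : Fin s, ⨅ u : FreeGroup (Fin n),
          (H i).comap ((MulAut.conj u).toMonoidHom)} oN)
    (o : Fin s → ℕ)
    (ho : ∀ i, IsLeast {m : ℕ | 0 < m ∧ α i * w ^ m * (α i)⁻¹ ∈ H i} (o i)) :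
    ∀ y : FreeGroup (Fin n),
      ∑ i ∈ Finset.univ.filter (fun i : Fin s => ∃ j : ℤ, y * w ^ j * (α i)⁻¹ ∈ H i),
        oN / o i = oN := by
  intro y
  have hconj : ∀ i, IsLeast {m : ℕ | 0 < m ∧ (α i * w * (α i)⁻¹) ^ m ∈ H i} (o i) := fun i => by
    simpa only [conj_pow] using ho i
  have hdvd : ∀ i, o i ∣ oN := fun i => by
    have hmem : α i * w ^ oN * (α i)⁻¹ ∈ H i :=
      Subgroup.mem_iInf.mp (Subgroup.mem_iInf.mp hoN.1.2 i) (α i)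
    refine Int.natCast_dvd_natCast.mp ((zpow_mem_iff_dvd_of_isLeast_s15 (hconj i) oN).mp ?_)
    rwa [zpow_natCast, conj_pow]
  calc _ = ∑ i ∈ univ.filter (fun i : Fin s => ∃ j : ℤ, y * w ^ j * (α i)⁻¹ ∈ H i),
          #{j ∈ range oN | y * w ^ j * (α i)⁻¹ ∈ H i} := by
        refine sum_congr rfl fun i hi => ?_
        obtain ⟨j₀, hj₀⟩ := (mem_filter.mp hi).2
        exact (card_filter_range_mul_pow_mem (hconj i) (hdvd i) hj₀).symm
    _ = #(range oN) := by
        refine sum_card_filter_of_existsUnique fun j _ => ?_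
        obtain ⟨i, hi, huniq⟩ := hpart (y * w ^ j)
        exact ⟨i, ⟨mem_filter.mpr ⟨mem_univ i, j, by rwa [zpow_natCast]⟩, hi⟩,
          fun i' hi' => huniq i' hi'.2⟩
    _ = oN := card_range oN

open scoped Classical in
/-- For a coset partition `{H i • α i}` of `F n`, `N` the intersection of the
normal cores of the `H i`, and `w ∉ ⋂ α_i⁻¹ H_i α_i` with `oN` the least positive integer
such that `w ^ oN ∈ N` and `o i` the least positive integer with `w ^ (o i) ∈ α_i⁻¹ H_i α_i`:
for every `y`, summing over the set `Y(y)` of indices `i` whose coset `H i • α i` meets the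
`w`-orbit of `y`, one has `Σ_{i ∈ Y(y)} oN / o i = oN`. -/
theorem loop_equation
    (n s : ℕ) (hn : 2 ≤ n)
    (H : Fin s → Subgroup (FreeGroup (Fin n)))
    (α : Fin s → FreeGroup (Fin n))
    (d : Fin s → ℕ)
    (hind : ∀ i, (H i).index = d i)
    (hone : ∀ i, 1 < d i)
    (hpart : ∀ x : FreeGroup (Fin n), ∃! i : Fin s, x * (α i)⁻¹ ∈ H i)
    (w : FreeGroup (Fin n))
    (hw : ¬ ∀ i, α i * w * (α i)⁻¹ ∈ H i)
    (oN : ℕ)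
    (hoN : IsLeast {o : ℕ | 0 < o ∧
        w ^ o ∈ ⨅ i : Fin s, ⨅ u : FreeGroup (Fin n),
          (H i).comap ((MulAut.conj u).toMonoidHom)} oN)
    (o : Fin s → ℕ)
    (ho : ∀ i, IsLeast {m : ℕ | 0 < m ∧ α i * w ^ m * (α i)⁻¹ ∈ H i} (o i)) :
    ∀ y : FreeGroup (Fin n),
      ∑ i ∈ Finset.univ.filter (fun i : Fin s => ∃ j : ℤ, y * w ^ j * (α i)⁻¹ ∈ H i),
        oN / o i = oN :=
  loop_equation_general n s H α hpart w oN hoN o ho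
end

section
/- Let n ≥ 2 and let H be a subgroup of the free group F_n of finite index d > 1 such that there exist w, g ∈ F_n for which the least positive integer m with w^m ∈ g⁻¹Hg equals d. Then every coset partition {K_jβ_j}_{j=1}^{t} of F_n in which H occurs as a subgroup of maximal index (i.e., K_{j_0} = H for some j_0 and [F_n : K_j] ≤ d for all j) has the index d appearing at least p times, where p is the smallest prime dividing d; in particular every such partition has multiplicity. -/
open Finset
local notation "μ" => ArithmeticFunction.moebius


lemma moebius_div_sum (m : ℕ) : ∑ i ∈ m.divisors, (μ i : ℤ) = if m = 1 then 1 else 0 := by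
  have h := congrArg (fun f : ArithmeticFunction ℤ => f m) ArithmeticFunction.moebius_mul_coe_zeta
  simp only [ArithmeticFunction.coe_mul_zeta_apply, ArithmeticFunction.one_apply] at h
  exact h

lemma sum_coprime_pow_eq_moebius {e : ℕ} (he : 0 < e) {η : ℂ} (hη : IsPrimitiveRoot η e) :
    ∑ k ∈ (Finset.range e).filter (fun k => Nat.Coprime k e), η ^ k = ((μ e : ℤ) : ℂ) := by
  have hdiv : ∀ k : ℕ, (Nat.gcd k e).divisors = e.divisors.filter (· ∣ k) := by
    intro k
    ext u
    simp only [Nat.mem_divisors, Finset.mem_filter, Nat.dvd_gcd_iff]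
    constructor
    · rintro ⟨⟨h1, h2⟩, _⟩; exact ⟨⟨h2, he.ne'⟩, h1⟩
    · rintro ⟨⟨h2, _⟩, h1⟩; exact ⟨⟨h1, h2⟩, fun hc => he.ne' (Nat.eq_zero_of_gcd_eq_zero_right hc)⟩
  calc ∑ k ∈ (Finset.range e).filter (fun k => Nat.Coprime k e), η ^ k
      = ∑ k ∈ Finset.range e, (if Nat.Coprime k e then (1:ℂ) else 0) * η ^ k := by
        rw [Finset.sum_filter]
        refine Finset.sum_congr rfl fun k _ => ?_
        by_cases h : Nat.Coprime k e <;> simp [h]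
    _ = ∑ k ∈ Finset.range e, (∑ u ∈ e.divisors.filter (· ∣ k), ((μ u : ℤ) : ℂ)) * η ^ k := by
        refine Finset.sum_congr rfl fun k _ => ?_
        congr 1
        have h2 : ∑ u ∈ (Nat.gcd k e).divisors, ((μ u : ℤ) : ℂ)
            = if Nat.gcd k e = 1 then 1 else 0 := by
          have h3 := moebius_div_sum (Nat.gcd k e)
          calc ∑ u ∈ (Nat.gcd k e).divisors, ((μ u : ℤ) : ℂ)
              = ((∑ u ∈ (Nat.gcd k e).divisors, μ u : ℤ) : ℂ) := by push_cast; rfl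
            _ = _ := by rw [h3]; split <;> simp
        rw [← hdiv k, h2]
    _ = ∑ u ∈ e.divisors, ((μ u : ℤ) : ℂ) * ∑ k ∈ (Finset.range e).filter (fun k => u ∣ k), η ^ k := by
        simp_rw [Finset.sum_mul, Finset.sum_filter, Finset.mul_sum]
        rw [Finset.sum_comm]
        refine Finset.sum_congr rfl fun k _ => Finset.sum_congr rfl fun u _ => ?_
        by_cases h : u ∣ k <;> simp [h]
    _ = ∑ u ∈ e.divisors, ((μ u : ℤ) : ℂ) * (if u = e then 1 else 0) := by
        refine Finset.sum_congr rfl fun u hu => ?_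
        obtain ⟨hue, hene⟩ := Nat.mem_divisors.mp hu
        have hu0 : 0 < u := Nat.pos_of_dvd_of_pos hue he
        congr 1
        obtain ⟨c, hc⟩ := hue
        have hcd : e / u = c := by rw [hc, Nat.mul_div_cancel_left _ hu0]
        have himg : (Finset.range e).filter (fun k => u ∣ k)
            = (Finset.range c).image (fun i => u * i) := by
          ext k
          simp only [Finset.mem_filter, Finset.mem_range, Finset.mem_image]
          constructor
          · rintro ⟨hk, i, rfl⟩
            refine ⟨i, ?_, rfl⟩
            rw [hc] at hk
            exact Nat.lt_of_mul_lt_mul_left hk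
          · rintro ⟨i, hi, rfl⟩
            exact ⟨by rw [hc]; exact (Nat.mul_lt_mul_left hu0).mpr hi, Dvd.intro i rfl⟩
        rw [himg, Finset.sum_image (by intro a _ b _ h; exact Nat.eq_of_mul_eq_mul_left hu0 h)]
        simp_rw [pow_mul]
        by_cases hue' : u = e
        · subst hue'
          have hc1 : c = 1 := by
            have := hc.symm
            nlinarith [hu0]
          subst hc1
          simp [hη.pow_eq_one]
        · have hlt : u < e := lt_of_le_of_ne (Nat.le_of_dvd he ⟨c, hc⟩) hue'
          have hne1 : η ^ u ≠ 1 := hη.pow_ne_one_of_pos_of_lt hu0.ne' hlt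
          rw [geom_sum_eq hne1, if_neg hue']
          have h4 : (η ^ u) ^ c = 1 := by
            rw [← pow_mul, ← hc, hη.pow_eq_one]
          rw [h4]
          simp
    _ = ((μ e : ℤ) : ℂ) := by
        rw [Finset.sum_eq_single e]
        · simp
        · intro u _ hne; simp [hne]
        · intro h; exact absurd (Nat.mem_divisors.mpr ⟨dvd_rfl, he.ne'⟩) h


lemma units_sum_pow (d : ℕ) [NeZero d] (hd0 : 0 < d) {ζ : ℂ} (hζ : IsPrimitiveRoot ζ d) (b : ℕ) :
    ∃ c : ℕ, c * (orderOf (ζ ^ b)).totient = d.totient ∧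
      ∑ k : (ZMod d)ˣ, (ζ ^ b) ^ ((k : ZMod d).val)
        = (c : ℂ) * ((μ (orderOf (ζ ^ b)) : ℤ) : ℂ) := by
  set η := ζ ^ b with hη_def
  set e := orderOf η with he_def
  have hdvd : e ∣ d := by
    rw [he_def, hζ.eq_orderOf]; exact orderOf_pow_dvd b
  have he0 : 0 < e := by
    have : IsOfFinOrder η := by
      refine isOfFinOrder_iff_pow_eq_one.mpr ⟨d, hd0, ?_⟩
      rw [hη_def, ← pow_mul, mul_comm, pow_mul, hζ.pow_eq_one, one_pow]
    exact this.orderOf_pos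
  haveI : NeZero e := ⟨he0.ne'⟩
  have hη : IsPrimitiveRoot η e := IsPrimitiveRoot.orderOf η
  set φm := ZMod.unitsMap hdvd with hφm
  have hsurj : Function.Surjective φm := ZMod.unitsMap_surjective hdvd
  -- the key rewriting
  have key : ∀ k : (ZMod d)ˣ, η ^ ((k : ZMod d).val) = η ^ (((φm k : (ZMod e)ˣ) : ZMod e).val) := by
    intro k
    have h1 : ((φm k : (ZMod e)ˣ) : ZMod e) = ((k : ZMod d).val : ZMod e) := by
      rw [hφm, ZMod.unitsMap_def, Units.coe_map]
      simp only [MonoidHom.coe_coe, ZMod.castHom_apply]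
      exact (ZMod.natCast_val _).symm
    rw [h1, ZMod.val_natCast, he_def, pow_mod_orderOf]
  -- constant fibers
  set c := (Finset.univ.filter (fun k : (ZMod d)ˣ => φm k = 1)).card with hc
  have hfib : ∀ y : (ZMod e)ˣ,
      (Finset.univ.filter (fun k : (ZMod d)ˣ => φm k = y)).card = c := by
    intro y
    obtain ⟨k₀, hk₀⟩ := hsurj y
    rw [hc]
    apply Finset.card_bij' (fun k _ => k * k₀⁻¹) (fun g _ => g * k₀)
    · intro a ha
      simp only [Finset.mem_filter, Finset.mem_univ, true_and] at ha ⊢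
      rw [map_mul, ha, map_inv, hk₀, mul_inv_cancel]
    · intro a ha
      simp only [Finset.mem_filter, Finset.mem_univ, true_and] at ha ⊢
      rw [map_mul, ha, hk₀, one_mul]
    · intro a _; simp
    · intro a _; simp
  -- the inner sum over units mod e
  have hinner : ∑ y : (ZMod e)ˣ, η ^ ((y : ZMod e).val) = ((μ e : ℤ) : ℂ) := by
    rw [← sum_coprime_pow_eq_moebius he0 hη]
    refine Finset.sum_bij' (fun (y : (ZMod e)ˣ) _ => (y : ZMod e).val)
      (fun k hk => ZMod.unitOfCoprime k (Finset.mem_filter.mp hk).2) ?_ ?_ ?_ ?_ ?_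
    · intro y _
      exact Finset.mem_filter.mpr ⟨Finset.mem_range.mpr (ZMod.val_lt _),
        ZMod.val_coe_unit_coprime y⟩
    · intro k hk; exact Finset.mem_univ _
    · intro y _
      ext
      rw [ZMod.coe_unitOfCoprime, ZMod.natCast_val, ZMod.cast_id]
    · intro k hk
      show ((ZMod.unitOfCoprime k (Finset.mem_filter.mp hk).2 : (ZMod e)ˣ) : ZMod e).val = k
      rw [ZMod.coe_unitOfCoprime, ZMod.val_cast_of_lt (Finset.mem_range.mp (Finset.mem_filter.mp hk).1)]
    · intro y _; rfl
  -- main computation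
  refine ⟨c, ?_, ?_⟩
  · have h1 : Fintype.card (ZMod d)ˣ = ∑ y : (ZMod e)ˣ, c := by
      rw [← Finset.card_univ, Finset.card_eq_sum_card_fiberwise
        (f := fun k : (ZMod d)ˣ => φm k) (t := Finset.univ) (fun x _ => Finset.mem_univ _)]
      exact Finset.sum_congr rfl fun y _ => hfib y
    rw [Finset.sum_const, Finset.card_univ, smul_eq_mul] at h1
    rw [← ZMod.card_units_eq_totient d, ← ZMod.card_units_eq_totient e, h1, mul_comm]
  · calc ∑ k : (ZMod d)ˣ, η ^ ((k : ZMod d).val)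
        = ∑ k : (ZMod d)ˣ, η ^ (((φm k : (ZMod e)ˣ) : ZMod e).val) :=
          Finset.sum_congr rfl fun k _ => key k
      _ = ∑ y : (ZMod e)ˣ, ∑ k ∈ Finset.univ.filter (fun k : (ZMod d)ˣ => φm k = y),
            η ^ (((φm k : (ZMod e)ˣ) : ZMod e).val) :=
          (Finset.sum_fiberwise Finset.univ (fun k => φm k)
            (fun k => η ^ (((φm k : (ZMod e)ˣ) : ZMod e).val))).symm
      _ = ∑ y : (ZMod e)ˣ, (c : ℂ) * η ^ ((y : ZMod e).val) := by
          refine Finset.sum_congr rfl fun y _ => ?_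
          rw [Finset.sum_congr rfl (fun k hk => by
            rw [(Finset.mem_filter.mp hk).2]), Finset.sum_const, hfib y, nsmul_eq_mul]
      _ = (c : ℂ) * ((μ e : ℤ) : ℂ) := by
          rw [← Finset.mul_sum, hinner]


lemma vanishing_sum_minFac {d : ℕ} (hd1 : 1 < d) {z : ℂ} (hz : IsPrimitiveRoot z d)
    {ι : Type*} [DecidableEq ι] (s : Finset ι) (hs : s.Nonempty) (b : ι → ℕ)
    (hsum : ∑ i ∈ s, z ^ b i = 0) : d.minFac ≤ s.card := by
  have hd0 : 0 < d := by omega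
  haveI : NeZero d := ⟨hd0.ne'⟩
  obtain ⟨i₀, hi₀⟩ := hs
  set r := d - b i₀ % d with hr
  set b' : ι → ℕ := fun i => (b i + r) % d with hb'
  have hzmod : ∀ m : ℕ, z ^ (m % d) = z ^ m := by
    intro m
    have := pow_mod_orderOf z m
    rwa [← hz.eq_orderOf] at this
  have hb'0 : b' i₀ = 0 := by
    have h1 : b i₀ % d < d := Nat.mod_lt _ hd0
    have h2 := Nat.div_add_mod (b i₀) d
    have h4 : d * (b i₀ / d + 1) = d * (b i₀ / d) + d := by ring
    have h3 : b i₀ + (d - b i₀ % d) = d * (b i₀ / d + 1) := by omega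
    show (b i₀ + r) % d = 0
    rw [hr, h3, Nat.mul_mod_right]
  have hsum' : ∑ i ∈ s, z ^ b' i = 0 := by
    have : ∀ i, z ^ b' i = z ^ b i * z ^ r := by
      intro i
      rw [hb']
      simp only []
      rw [hzmod, pow_add]
    simp_rw [this, ← Finset.sum_mul, hsum, zero_mul]
  -- polynomial divisibility
  set P : Polynomial ℚ := ∑ i ∈ s, Polynomial.X ^ (b' i) with hP
  have hPz : Polynomial.aeval z P = 0 := by
    rw [hP]
    simp only [map_sum, map_pow, Polynomial.aeval_X]
    exact hsum'
  have hmin : Polynomial.cyclotomic d ℚ ∣ P := by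
    rw [Polynomial.cyclotomic_eq_minpoly_rat hz hd0]
    exact minpoly.dvd ℚ z hPz
  obtain ⟨Q, hQ⟩ := hmin
  have hroot : ∀ k : (ZMod d)ˣ, ∑ i ∈ s, (z ^ (b' i)) ^ ((k : ZMod d).val) = 0 := by
    intro k
    have hcop : ((k : ZMod d).val).Coprime d := ZMod.val_coe_unit_coprime k
    have hprim : IsPrimitiveRoot (z ^ ((k : ZMod d).val)) d := hz.pow_of_coprime _ hcop
    have hcycroot : Polynomial.aeval (z ^ ((k : ZMod d).val)) (Polynomial.cyclotomic d ℚ) = 0 := by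
      rw [Polynomial.aeval_def, ← Polynomial.eval_map, Polynomial.map_cyclotomic]
      exact hprim.isRoot_cyclotomic hd0
    have h5 : Polynomial.aeval (z ^ ((k : ZMod d).val)) P = 0 := by
      rw [hQ, map_mul, hcycroot, zero_mul]
    rw [hP] at h5
    simp only [map_sum, map_pow, Polynomial.aeval_X] at h5
    calc ∑ i ∈ s, (z ^ (b' i)) ^ ((k : ZMod d).val)
        = ∑ i ∈ s, (z ^ ((k : ZMod d).val)) ^ (b' i) := by
          refine Finset.sum_congr rfl fun i _ => ?_
          rw [← pow_mul, ← pow_mul, mul_comm]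
      _ = 0 := h5
  -- choose the c's
  choose c hc1 hc2 using fun i => units_sum_pow d hd0 hz (b' i)
  set e : ι → ℕ := fun i => orderOf (z ^ (b' i)) with he
  -- the integer relation
  have hZc : ∑ i ∈ s, ((c i : ℤ) * μ (e i) : ℤ) = 0 := by
    have h6 : ∑ i ∈ s, ((c i : ℂ) * ((μ (e i) : ℤ) : ℂ)) = 0 := by
      have h8 : ∑ i ∈ s, ∑ k : (ZMod d)ˣ, (z ^ b' i) ^ ((k : ZMod d).val) = 0 := by
        rw [Finset.sum_comm]
        exact Finset.sum_eq_zero fun k _ => hroot k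
      rw [← h8]
      exact Finset.sum_congr rfl fun i _ => (hc2 i).symm
    have h7 : ((∑ i ∈ s, (c i : ℤ) * μ (e i) : ℤ) : ℂ) = 0 := by
      push_cast
      exact h6
    exact_mod_cast h7
  -- facts about i₀
  have he0 : e i₀ = 1 := by
    show orderOf (z ^ b' i₀) = 1
    rw [hb'0, pow_zero, orderOf_one]
  have hci₀ : c i₀ = d.totient := by
    have h9 := hc1 i₀
    rw [show orderOf (z ^ b' i₀) = e i₀ from rfl, he0, Nat.totient_one, mul_one] at h9
    exact h9
  have hp : (d.minFac).Prime := Nat.minFac_prime (by omega)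
  have hedvd : ∀ i, e i ∣ d := by
    intro i
    have := orderOf_pow_dvd (x := z) (b' i)
    rwa [← hz.eq_orderOf] at this
  have hφd : 0 < d.totient := Nat.totient_pos.mpr hd0
  have hbound : ∀ i, μ (e i) = -1 → (d.minFac - 1) * c i ≤ d.totient := by
    intro i hμ
    have hei1 : e i ≠ 1 := by
      intro h
      rw [h] at hμ
      simp [ArithmeticFunction.moebius_apply_one] at hμ
    have hei0 : e i ≠ 0 := by
      intro h
      have h0 := hedvd i
      rw [h] at h0
      exact hd0.ne' (Nat.eq_zero_of_zero_dvd h0)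
    set q := (e i).minFac with hq
    have hqp : q.Prime := Nat.minFac_prime hei1
    have hqd : q ∣ d := dvd_trans (Nat.minFac_dvd _) (hedvd i)
    have hpq : d.minFac ≤ q := Nat.minFac_le_of_dvd hqp.two_le hqd
    have h10 : q - 1 ≤ (e i).totient := by
      have h11 : (q).totient ∣ (e i).totient := Nat.totient_dvd_of_dvd (Nat.minFac_dvd _)
      have h12 : 0 < (e i).totient := Nat.totient_pos.mpr (Nat.pos_of_ne_zero hei0)
      have := Nat.le_of_dvd h12 h11
      rwa [Nat.totient_prime hqp] at this
    calc (d.minFac - 1) * c i ≤ (e i).totient * c i := by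
          apply Nat.mul_le_mul_right
          omega
      _ = d.totient := by rw [mul_comm]; exact hc1 i
  -- the counting
  set A' := (s.erase i₀).filter (fun i => μ (e i) = -1) with hA'
  have step1 : d.totient ≤ ∑ i ∈ A', c i := by
    have h13 : ∑ i ∈ s.erase i₀, (c i : ℤ) * μ (e i) + (c i₀ : ℤ) * μ (e i₀) = 0 := by
      rw [Finset.sum_erase_add s _ hi₀]
      exact hZc
    rw [he0, ArithmeticFunction.moebius_apply_one] at h13
    have h14 : (d.totient : ℤ) = ∑ i ∈ s.erase i₀, -((c i : ℤ) * μ (e i)) := by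
      rw [Finset.sum_neg_distrib]
      rw [hci₀] at h13
      push_cast at h13 ⊢
      linarith
    have h15 : ∑ i ∈ s.erase i₀, -((c i : ℤ) * μ (e i))
        ≤ ∑ i ∈ s.erase i₀, (if μ (e i) = -1 then (c i : ℤ) else 0) := by
      refine Finset.sum_le_sum fun i _ => ?_
      rcases ArithmeticFunction.moebius_eq_or (e i) with h | h | h <;> simp [h]
    rw [← Finset.sum_filter] at h15
    have h16 : (d.totient : ℤ) ≤ ∑ i ∈ A', (c i : ℤ) := le_trans (le_of_eq h14) h15
    exact_mod_cast h16
  have step2 : (d.minFac - 1) * d.totient ≤ A'.card * d.totient := by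
    calc (d.minFac - 1) * d.totient ≤ (d.minFac - 1) * ∑ i ∈ A', c i :=
          Nat.mul_le_mul_left _ step1
      _ = ∑ i ∈ A', (d.minFac - 1) * c i := Finset.mul_sum _ _ _
      _ ≤ ∑ i ∈ A', d.totient := by
          refine Finset.sum_le_sum fun i hi => ?_
          exact hbound i (Finset.mem_filter.mp hi).2
      _ = A'.card * d.totient := by rw [Finset.sum_const, smul_eq_mul]
  have step3 : d.minFac - 1 ≤ A'.card := Nat.le_of_mul_le_mul_right step2 hφd
  have step4 : A'.card ≤ s.card - 1 := by
    calc A'.card ≤ (s.erase i₀).card := Finset.card_filter_le _ _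
      _ = s.card - 1 := Finset.card_erase_of_mem hi₀
  have hs1 : 1 ≤ s.card := Finset.card_pos.mpr ⟨i₀, hi₀⟩
  have := hp.two_le
  omega


section Aux
variable {G : Type*} [Group G]

lemma conj_mul_aux (g w : G) (a b : ℤ) :
    (g * w ^ a * g⁻¹) * (g * w ^ b * g⁻¹) = g * w ^ (a + b) * g⁻¹ := by
  rw [zpow_add]; group

lemma conj_inv_aux (g w : G) (a : ℤ) : (g * w ^ a * g⁻¹)⁻¹ = g * w ^ (-a) * g⁻¹ := by
  rw [zpow_neg]; group

lemma conj_zpow_pow (g w : G) (m : ℤ) (q : ℤ) :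
    g * w ^ (m * q) * g⁻¹ = (g * w ^ m * g⁻¹) ^ q := by
  have h := map_zpow (MulAut.conj g) (w ^ m) q
  simp only [MulAut.conj_apply] at h
  rw [← h, ← zpow_mul]

lemma line_aux (g w : G) (a b : ℤ) :
    ((g * w ^ a)⁻¹)⁻¹ * (g * w ^ b)⁻¹ = g * w ^ (a - b) * g⁻¹ := by
  rw [sub_eq_add_neg, zpow_add, zpow_neg]; group

lemma shift_aux (g w b : G) (x y : ℤ) :
    (g * w ^ x * g⁻¹) * (g * w ^ y * b⁻¹) = g * w ^ (x + y) * b⁻¹ := by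
  rw [zpow_add]; group

lemma diff_aux (g w b : G) (x y : ℤ) :
    (g * w ^ x * b⁻¹) * (g * w ^ y * b⁻¹)⁻¹ = g * w ^ (x - y) * g⁻¹ := by
  rw [sub_eq_add_neg, zpow_add, zpow_neg]; group

lemma dvd_char (K : Subgroup G) (g w : G) (m : ℕ) (hm : 0 < m)
    (hmem : g * w ^ (m : ℤ) * g⁻¹ ∈ K)
    (hmin : ∀ m' : ℕ, 0 < m' → m' < m → ¬ (g * w ^ (m' : ℤ) * g⁻¹ ∈ K)) :
    ∀ a : ℤ, g * w ^ a * g⁻¹ ∈ K ↔ (m : ℤ) ∣ a := by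
  intro a
  constructor
  · intro ha
    have hr : g * w ^ (a % m) * g⁻¹ ∈ K := by
      have hq : g * w ^ ((m : ℤ) * (a / m)) * g⁻¹ ∈ K := by
        rw [conj_zpow_pow]
        exact Subgroup.zpow_mem K hmem _
      have h2 := K.mul_mem ha ((K.inv_mem hq))
      rw [conj_inv_aux, conj_mul_aux] at h2
      have harith : a + -((m : ℤ) * (a / m)) = a % m := by
        rw [Int.emod_def]; ring
      rwa [harith] at h2
    by_contra hnd
    have hr0 : a % m ≠ 0 := fun h => hnd (Int.dvd_of_emod_eq_zero h)
    have hrpos : 0 < a % m :=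
      lt_of_le_of_ne (Int.emod_nonneg a (by exact_mod_cast hm.ne')) (Ne.symm hr0)
    have hrlt : a % m < m := Int.emod_lt_of_pos a (by exact_mod_cast hm)
    have h3 := hmin (a % m).toNat (by omega) (by omega)
    rw [Int.toNat_of_nonneg hrpos.le] at h3
    exact h3 hr
  · rintro ⟨q, rfl⟩
    rw [conj_zpow_pow]
    exact Subgroup.zpow_mem K hmem _
end Aux

/-- If `H ≤ F n` has finite index `d > 1` and some `w` has order `d` at some
right coset `H g` (a `d`-cycle condition), then in every coset partition of `F n` in which `H`
occurs as a subgroup of maximal index, the index `d` appears at least `p` times, where `p` is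
the smallest prime dividing `d`; in particular every such partition has multiplicity. -/
theorem completion_multiplicity
    (n : ℕ) (hn : 2 ≤ n)
    (H : Subgroup (FreeGroup (Fin n))) (d : ℕ)
    (hd : H.index = d) (hd1 : 1 < d)
    (hcyc : ∃ w g : FreeGroup (Fin n),
        IsLeast {m : ℕ | 0 < m ∧ g * w ^ m * g⁻¹ ∈ H} d) :
    ∀ (t : ℕ) (K : Fin t → Subgroup (FreeGroup (Fin n)))
      (β : Fin t → FreeGroup (Fin n)),
      (∀ j, 1 < (K j).index) →
      (∀ x : FreeGroup (Fin n), ∃! j : Fin t, x * (β j)⁻¹ ∈ K j) →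
      (∃ j₀, K j₀ = H) →
      (∀ j, (K j).index ≤ d) →
      d.minFac ≤ (Finset.univ.filter (fun j => (K j).index = d)).card ∧
      ∃ j j', j ≠ j' ∧ (K j).index = (K j').index := by
  intro t K β h1 hpart hj₀ hle
  classical
  obtain ⟨w, g, hcyc⟩ := hcyc
  obtain ⟨j₀, hKj₀⟩ := hj₀
  have hd0 : 0 < d := by omega
  haveI : NeZero d := ⟨hd0.ne'⟩
  -- existence of periods
  have hper : ∀ j : Fin t, ∃ m : ℕ,
      (0 < m ∧ g * w ^ (m : ℤ) * g⁻¹ ∈ K j) ∧ m ≤ (K j).index := by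
    intro j
    have hidx : (K j).index ≠ 0 := by have := h1 j; omega
    have hfin : Finite (FreeGroup (Fin n) ⧸ (K j)) := by
      rw [Subgroup.index] at hidx
      exact (Nat.card_ne_zero.mp hidx).2
    haveI := Fintype.ofFinite (FreeGroup (Fin n) ⧸ (K j))
    set f : Fin ((K j).index + 1) → FreeGroup (Fin n) ⧸ (K j) :=
      fun i => QuotientGroup.mk ((g * w ^ ((i : ℕ) : ℤ) * g⁻¹)⁻¹) with hf
    obtain ⟨x, y, hxy, hfxy⟩ := Fintype.exists_ne_map_eq_of_card_lt f (by
      rw [Fintype.card_fin]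
      have : Fintype.card (FreeGroup (Fin n) ⧸ (K j)) = (K j).index := by
        rw [Subgroup.index, Nat.card_eq_fintype_card]
      omega)
    -- wlog y < x
    rcases lt_or_gt_of_ne (fun h : (x : ℕ) = (y : ℕ) => hxy (Fin.ext h)) with hlt | hlt
    case _ =>
      refine ⟨(y : ℕ) - (x : ℕ), ⟨by omega, ?_⟩, by omega⟩
      have h4 := QuotientGroup.eq.mp hfxy.symm
      rw [inv_inv, conj_inv_aux, conj_mul_aux] at h4
      have : ((((y:ℕ) - (x:ℕ) : ℕ)) : ℤ) = ((y:ℕ):ℤ) + -((x:ℕ):ℤ) := by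
        push_cast; omega
      rwa [← this] at h4
    case _ =>
      refine ⟨(x : ℕ) - (y : ℕ), ⟨by omega, ?_⟩, by omega⟩
      have h4 := QuotientGroup.eq.mp hfxy
      rw [inv_inv, conj_inv_aux, conj_mul_aux] at h4
      have : ((((x:ℕ) - (y:ℕ) : ℕ)) : ℤ) = ((x:ℕ):ℤ) + -((y:ℕ):ℤ) := by
        push_cast; omega
      rwa [← this] at h4
  have hexQ : ∀ j : Fin t, ∃ m : ℕ, 0 < m ∧ g * w ^ (m : ℤ) * g⁻¹ ∈ K j :=
    fun j => ⟨(hper j).choose, (hper j).choose_spec.1⟩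
  set mm : Fin t → ℕ := fun j => Nat.find (hexQ j) with hmm
  have hmm_pos : ∀ j, 0 < mm j := fun j => (Nat.find_spec (hexQ j)).1
  have hmm_mem : ∀ j, g * w ^ ((mm j : ℕ) : ℤ) * g⁻¹ ∈ K j := fun j => (Nat.find_spec (hexQ j)).2
  have hmm_le : ∀ j, mm j ≤ (K j).index := by
    intro j
    exact le_trans (Nat.find_min' (hexQ j) (hper j).choose_spec.1) (hper j).choose_spec.2
  have hmm_le_d : ∀ j, mm j ≤ d := fun j => le_trans (hmm_le j) (hle j)
  have hdvdc : ∀ j (a : ℤ), g * w ^ a * g⁻¹ ∈ K j ↔ ((mm j : ℕ) : ℤ) ∣ a := by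
    intro j
    refine dvd_char (K j) g w (mm j) (hmm_pos j) (hmm_mem j) ?_
    intro m' hm'0 hm'lt hmem'
    exact Nat.find_min (hexQ j) hm'lt ⟨hm'0, hmem'⟩
  -- mm j₀ = d
  have hmmj₀ : mm j₀ = d := by
    have hup : mm j₀ ≤ d := by
      apply Nat.find_min' (hexQ j₀)
      refine ⟨hd0, ?_⟩
      rw [hKj₀, zpow_natCast]
      exact hcyc.1.2
    have hdown : d ≤ mm j₀ := by
      apply hcyc.2
      refine ⟨hmm_pos j₀, ?_⟩
      have := hmm_mem j₀
      rw [hKj₀, zpow_natCast] at this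
      exact this
    omega
  -- transitivity: every coset of H meets the line {g w^k}
  have htrans : ∃ v : ℕ, v < d ∧ g * w ^ ((v : ℕ) : ℤ) * (β j₀)⁻¹ ∈ K j₀ := by
    have hHidx : H.index ≠ 0 := by omega
    have hfinH : Finite (FreeGroup (Fin n) ⧸ H) := by
      rw [Subgroup.index] at hHidx
      exact (Nat.card_ne_zero.mp hHidx).2
    haveI := Fintype.ofFinite (FreeGroup (Fin n) ⧸ H)
    set q : ZMod d → FreeGroup (Fin n) ⧸ H := fun k => QuotientGroup.mk ((g * w ^ ((k.val : ℕ) : ℤ))⁻¹) with hq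
    have hqinj : Function.Injective q := by
      intro k1 k2 heq
      have h5 := QuotientGroup.eq.mp heq
      rw [line_aux] at h5
      rw [← hKj₀] at h5
      rw [hdvdc j₀, hmmj₀] at h5
      have h6 : ((k1.val : ℤ) - (k2.val : ℤ)) = 0 := by
        apply Int.eq_zero_of_abs_lt_dvd h5
        have := ZMod.val_lt k1
        have := ZMod.val_lt k2
        rw [abs_sub_lt_iff]
        constructor <;> [skip; skip] <;> push_cast <;> omega
      apply ZMod.val_injective
      omega
    have hqsurj : Function.Surjective q := by
      have hbij : Function.Bijective q := by
        rw [Fintype.bijective_iff_injective_and_card]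
        refine ⟨hqinj, ?_⟩
        rw [ZMod.card]
        rw [← Nat.card_eq_fintype_card, ← Subgroup.index, hd]
      exact hbij.2
    obtain ⟨k, hk⟩ := hqsurj (QuotientGroup.mk ((β j₀)⁻¹))
    refine ⟨k.val, ZMod.val_lt k, ?_⟩
    have h7 := QuotientGroup.eq.mp hk
    rw [inv_inv] at h7
    rw [hKj₀]
    exact h7
  -- setup of N and the root of unity
  set M := ∏ j : Fin t, mm j with hM
  have hM_pos : 0 < M := Finset.prod_pos (fun j _ => hmm_pos j)
  set N := d * M with hN
  have hN_pos : 0 < N := Nat.mul_pos hd0 hM_pos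
  have hdN : d ∣ N := dvd_mul_right d M
  have hNd : N / d = M := by rw [hN, Nat.mul_div_cancel_left _ hd0]
  have hmmN : ∀ j, mm j ∣ N :=
    fun j => Dvd.dvd.mul_left (Finset.dvd_prod_of_mem mm (mem_univ j)) d
  set z : ℂ := Complex.exp (2 * Real.pi * Complex.I / d) with hzdef
  have hz : IsPrimitiveRoot z d := Complex.isPrimitiveRoot_exp d hd0.ne'
  -- the fibers
  set Fj : Fin t → Finset ℕ :=
    fun j => (range N).filter (fun k => g * w ^ ((k : ℕ) : ℤ) * (β j)⁻¹ ∈ K j) with hFj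
  set J : ℕ → Fin t := fun k => (hpart (g * w ^ ((k : ℕ) : ℤ))).choose with hJ
  have hJ1 : ∀ k : ℕ, g * w ^ ((k : ℕ) : ℤ) * (β (J k))⁻¹ ∈ K (J k) :=
    fun k => (hpart (g * w ^ ((k : ℕ) : ℤ))).choose_spec.1
  have hJ2 : ∀ (k : ℕ) (j : Fin t), g * w ^ ((k : ℕ) : ℤ) * (β j)⁻¹ ∈ K j → j = J k :=
    fun k j h => (hpart (g * w ^ ((k : ℕ) : ℤ))).choose_spec.2 j h
  have hfib : ∀ j, (range N).filter (fun k => J k = j) = Fj j := by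
    intro j
    ext k
    simp only [hFj, mem_filter, mem_range]
    constructor
    · rintro ⟨hk, rfl⟩
      exact ⟨hk, hJ1 k⟩
    · rintro ⟨hk, hmem⟩
      exact ⟨hk, (hJ2 k j hmem).symm⟩
  have sum0 : ∑ k ∈ range N, z ^ k = 0 := by
    have hzN : z ^ N = 1 := by
      rw [hN, pow_mul, hz.pow_eq_one, one_pow]
    rw [geom_sum_eq (hz.ne_one hd1), hzN]
    simp
  have main : ∑ j : Fin t, ∑ k ∈ Fj j, z ^ k = 0 := by
    rw [← sum0, ← Finset.sum_fiberwise (range N) J (fun k => z ^ k)]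
    exact Finset.sum_congr rfl fun j _ => by rw [hfib j]
  -- same-fiber divisibility and shifting
  have hsame : ∀ j (k k' : ℕ), k ∈ Fj j → k' ∈ Fj j → ((mm j : ℕ) : ℤ) ∣ (k : ℤ) - (k' : ℤ) := by
    intro j k k' hk hk'
    have h8 := (K j).mul_mem (mem_filter.mp hk).2 ((K j).inv_mem (mem_filter.mp hk').2)
    rw [diff_aux] at h8
    exact (hdvdc j _).mp h8
  have hshift : ∀ j (k k' : ℕ), k ∈ Fj j → ((mm j : ℕ) : ℤ) ∣ (k' : ℤ) - (k : ℤ) → k' < N →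
      k' ∈ Fj j := by
    intro j k k' hk hdvd hk'N
    have h9 : g * w ^ ((k' : ℤ) - (k : ℤ)) * g⁻¹ ∈ K j := (hdvdc j _).mpr hdvd
    have h10 := (K j).mul_mem h9 (mem_filter.mp hk).2
    rw [shift_aux] at h10
    have : (k' : ℤ) - (k : ℤ) + (k : ℤ) = (k' : ℤ) := by ring
    rw [this] at h10
    exact mem_filter.mpr ⟨mem_range.mpr hk'N, h10⟩
  -- structure of nonempty fibers
  have hstruct : ∀ j, ∀ k₀ ∈ Fj j,
      Fj j = (range (N / mm j)).image (fun i => i * mm j + k₀ % mm j) := by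
    intro j k₀ hk₀
    have hmj := hmm_pos j
    ext k
    simp only [mem_image, mem_range]
    constructor
    · intro hk
      have hdvd := hsame j k k₀ hk hk₀
      have hmod : k % mm j = k₀ % mm j := by
        have : k₀ ≡ k [MOD mm j] := (Nat.modEq_iff_dvd).mpr hdvd
        exact this.symm
      refine ⟨k / mm j, ?_, ?_⟩
      · exact Nat.div_lt_div_of_lt_of_dvd (hmmN j) (mem_range.mp (mem_filter.mp hk).1)
      · have h20 := Nat.div_add_mod k (mm j)
        have h21 : (k / mm j) * mm j = mm j * (k / mm j) := Nat.mul_comm _ _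
        omega
    · rintro ⟨i, hi, rfl⟩
      have hrlt : k₀ % mm j < mm j := Nat.mod_lt _ hmj
      have hNmm : (N / mm j) * mm j = N := Nat.div_mul_cancel (hmmN j)
      apply hshift j k₀ _ hk₀
      · have hk₀eq := Nat.div_add_mod k₀ (mm j)
        refine ⟨(i : ℤ) - (k₀ / mm j : ℕ), ?_⟩
        have hk₀int : ((mm j : ℕ) : ℤ) * ((k₀ / mm j : ℕ) : ℤ) + ((k₀ % mm j : ℕ) : ℤ)
            = (k₀ : ℤ) := by exact_mod_cast hk₀eq
        rw [show ((i * mm j + k₀ % mm j : ℕ) : ℤ)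
            = (i : ℤ) * ((mm j : ℕ) : ℤ) + ((k₀ % mm j : ℕ) : ℤ) by push_cast; ring]
        linear_combination hk₀int
      · have h11 : i + 1 ≤ N / mm j := hi
        calc i * mm j + k₀ % mm j < (i + 1) * mm j := by
              rw [add_mul, one_mul]; omega
          _ ≤ (N / mm j) * mm j := Nat.mul_le_mul_right _ h11
          _ = N := hNmm
  -- evaluation of fiber sums
  have hval1 : ∀ j, ∀ k₀ ∈ Fj j, mm j = d →
      ∑ k ∈ Fj j, z ^ k = ((N / d : ℕ) : ℂ) * z ^ (k₀ % d) := by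
    intro j k₀ hk₀ hmmd
    rw [hstruct j k₀ hk₀, hmmd]
    rw [Finset.sum_image (by
      intro a _ b _ h
      have h22 := Nat.add_right_cancel h
      exact Nat.eq_of_mul_eq_mul_right hd0 h22)]
    have : ∀ i, z ^ (i * d + k₀ % d) = z ^ (k₀ % d) := by
      intro i
      rw [pow_add, mul_comm i d, pow_mul, hz.pow_eq_one, one_pow, one_mul]
    simp_rw [this]
    rw [Finset.sum_const, card_range, nsmul_eq_mul]
  have hval0 : ∀ j, mm j ≠ d → ∑ k ∈ Fj j, z ^ k = 0 := by
    intro j hne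
    rcases (Fj j).eq_empty_or_nonempty with hemp | ⟨k₀, hk₀⟩
    · rw [hemp, Finset.sum_empty]
    · rw [hstruct j k₀ hk₀]
      rw [Finset.sum_image (by
        intro a _ b _ h
        have h22 := Nat.add_right_cancel h
        exact Nat.eq_of_mul_eq_mul_right (hmm_pos j) h22)]
      have hterm : ∀ i, z ^ (i * mm j + k₀ % mm j) = z ^ (k₀ % mm j) * (z ^ mm j) ^ i := by
        intro i
        have h23 : z ^ (i * mm j) = (z ^ mm j) ^ i := by
          rw [← pow_mul, mul_comm]
        rw [pow_add, h23, mul_comm]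
      simp_rw [hterm]
      rw [← Finset.mul_sum]
      have hlt : mm j < d := lt_of_le_of_ne (hmm_le_d j) hne
      have hzne : z ^ mm j ≠ 1 := hz.pow_ne_one_of_pos_of_lt (hmm_pos j).ne' hlt
      rw [geom_sum_eq hzne]
      have h12 : (z ^ mm j) ^ (N / mm j) = 1 := by
        rw [← pow_mul, Nat.mul_div_cancel' (hmmN j), hN, pow_mul, hz.pow_eq_one, one_pow]
      rw [h12]
      simp
  -- the set S and residues
  set S : Finset (Fin t) := univ.filter (fun j => mm j = d ∧ (Fj j).Nonempty) with hS
  set rr : Fin t → ℕ := fun j => if h : (Fj j).Nonempty then h.choose % d else 0 with hrr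
  have hSsum : ∑ j ∈ S, z ^ rr j = 0 := by
    have h13 : ∑ j : Fin t, ∑ k ∈ Fj j, z ^ k
        = ∑ j ∈ S, ((N / d : ℕ) : ℂ) * z ^ rr j := by
      rw [hS, Finset.sum_filter]
      refine Finset.sum_congr rfl fun j _ => ?_
      split_ifs with hcond
      · obtain ⟨hmmd, hne⟩ := hcond
        rw [hval1 j hne.choose hne.choose_spec hmmd]
        congr 1
        rw [hrr]
        simp only [dif_pos hne]
      · by_cases hmmd : mm j = d
        · have hne : ¬ (Fj j).Nonempty := fun h => hcond ⟨hmmd, h⟩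
          rw [Finset.not_nonempty_iff_eq_empty.mp hne, Finset.sum_empty]
        · exact hval0 j hmmd
    rw [main] at h13
    have h14 : ((N / d : ℕ) : ℂ) * ∑ j ∈ S, z ^ rr j = 0 := by
      rw [Finset.mul_sum]
      exact h13.symm
    have h15 : ((N / d : ℕ) : ℂ) ≠ 0 := by
      rw [hNd]
      exact_mod_cast hM_pos.ne'
    exact (mul_eq_zero.mp h14).resolve_left h15
  have hj₀S : j₀ ∈ S := by
    rw [hS, mem_filter]
    refine ⟨mem_univ _, hmmj₀, ?_⟩
    obtain ⟨v, hvd, hvmem⟩ := htrans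
    refine ⟨v, mem_filter.mpr ⟨mem_range.mpr ?_, hvmem⟩⟩
    calc v < d := hvd
      _ ≤ N := Nat.le_mul_of_pos_right d hM_pos
  -- apply the vanishing sum bound
  have hminFac := vanishing_sum_minFac hd1 hz S ⟨j₀, hj₀S⟩ rr hSsum
  constructor
  · refine le_trans hminFac (Finset.card_le_card ?_)
    intro j hj
    obtain ⟨-, hmmd, -⟩ := mem_filter.mp hj
    refine mem_filter.mpr ⟨mem_univ _, le_antisymm (hle j) ?_⟩
    rw [← hmmd]
    exact hmm_le j
  · have h2le : 2 ≤ d.minFac := (Nat.minFac_prime (by omega)).two_le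
    have hcard : 1 < (Finset.univ.filter (fun j => (K j).index = d)).card := by
      have := le_trans hminFac (Finset.card_le_card (by
        intro j hj
        obtain ⟨-, hmmd, -⟩ := mem_filter.mp hj
        refine mem_filter.mpr ⟨mem_univ _, le_antisymm (hle j) ?_⟩
        rw [← hmmd]
        exact hmm_le j))
      omega
    obtain ⟨a, ha, b, hb, hab⟩ := Finset.one_lt_card.mp hcard
    exact ⟨a, b, hab, by rw [(mem_filter.mp ha).2, (mem_filter.mp hb).2]⟩
end
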